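/- arXiv:0908.2501 — 4 statements merged into one kernel-verified Lean document; each statement's English description precedes it below -/
import Mathlib

section
/- Let f : ℝ×[0,∞) → ℝ be a smooth function such that for every compact interval J ⊆ [0,∞) and every integer n ≥ 0 one has ∂ₓⁿf(x,t) = O(|x|^{1/2−n}) as |x| → ∞ uniformly for t ∈ J, let g ∈ S^{-∞}(ℝ×[0,∞)), let u₀ ∈ S^{-∞}(ℝ), and let T > 0. If u, v ∈ S^{-∞}(ℝ×[0,T]) both satisfy u_t + u²u_x + u_{xxx} + (u²f)_x + (f²u)_x + g = 0 on ℝ×[0,T] with u(x,0) = v(x,0) = u₀(x) for all x, then u(x,t) = v(x,t) for all (x,t) ∈ ℝ×[0,T]. -/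
noncomputable section

open Set Filter

/-- The `j`-th partial derivative in `x` of `u(x,t)`. -/
def pdx (j : ℕ) (u : ℝ → ℝ → ℝ) (x t : ℝ) : ℝ := iteratedDeriv j (fun y => u y t) x

/-- The mixed partial derivative `∂ₜⁱ ∂ₓʲ u (x,t)`. -/
def pdtx (i j : ℕ) (u : ℝ → ℝ → ℝ) (x t : ℝ) : ℝ :=
  iteratedDeriv i (fun s => pdx j u x s) t

/-- `u : ℝ × ℝ → ℝ` (curried) is smooth. -/
def SmoothR2 (u : ℝ → ℝ → ℝ) : Prop := ContDiff ℝ (⊤ : ℕ∞) (Function.uncurry u)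

/-- `u ∈ S^{-∞}(ℝ)`: smooth with all derivatives decaying faster than any power. -/
def SNegInfLine (u : ℝ → ℝ) : Prop :=
  ContDiff ℝ (⊤ : ℕ∞) u ∧
    ∀ N j : ℕ, ∃ C > 0, ∀ x : ℝ, 1 ≤ |x| → |iteratedDeriv j u x| ≤ C * |x| ^ (-(N : ℝ))

/-- `u ∈ S^{-∞}(ℝ × I)`. -/
def SNegInfPlane (I : Set ℝ) (u : ℝ → ℝ → ℝ) : Prop :=
  SmoothR2 u ∧
    ∀ J : Set ℝ, J ⊆ I → IsCompact J → ∀ N i j : ℕ, ∃ C > 0,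
      ∀ x t : ℝ, 1 ≤ |x| → t ∈ J → |pdtx i j u x t| ≤ C * |x| ^ (-(N : ℝ))

/-- The growth hypothesis on `f`: smooth, and for each compact `J ⊆ [0,∞)` and each `n`,
`∂ₓⁿ f (x,t) = O(|x|^{1/2-n})` uniformly for `t ∈ J`. -/
def FGrow (f : ℝ → ℝ → ℝ) : Prop :=
  SmoothR2 f ∧
    ∀ J : Set ℝ, J ⊆ Set.Ici 0 → IsCompact J → ∀ n : ℕ, ∃ C > 0,
      ∀ x t : ℝ, 1 ≤ |x| → t ∈ J → |pdx n f x t| ≤ C * |x| ^ ((1 : ℝ) / 2 - (n : ℝ))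

/-- `u` solves the generalized mKdV equation
`u_t + u² u_x + u_{xxx} + (u² f)_x + (f² u)_x + g = 0` on `ℝ × [0,T]`. -/
def GenMKdV (f g u : ℝ → ℝ → ℝ) (T : ℝ) : Prop :=
  ∀ x t : ℝ, t ∈ Set.Icc 0 T →
    deriv (fun s => u x s) t + (u x t) ^ 2 * deriv (fun y => u y t) x
      + iteratedDeriv 3 (fun y => u y t) x
      + deriv (fun y => (u y t) ^ 2 * f y t) x
      + deriv (fun y => (f y t) ^ 2 * u y t) x
      + g x t = 0


open MeasureTheory Topology

namespace MKdVAux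

lemma smoothR2_sliceX {u : ℝ → ℝ → ℝ} (h : SmoothR2 u) (t : ℝ) :
    ContDiff ℝ (⊤ : ℕ∞) (fun y => u y t) :=
  h.comp (contDiff_id.prodMk contDiff_const)

lemma smoothR2_sliceT {u : ℝ → ℝ → ℝ} (h : SmoothR2 u) (x : ℝ) :
    ContDiff ℝ (⊤ : ℕ∞) (fun s => u x s) :=
  h.comp (contDiff_const.prodMk contDiff_id)

lemma hasDerivAt_sliceX {u : ℝ → ℝ → ℝ} (h : SmoothR2 u) (x t : ℝ) :
    HasDerivAt (fun y => u y t)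
      (fderiv ℝ (Function.uncurry u) (x, t) (1, 0)) x := by
  have h1 : HasFDerivAt (Function.uncurry u) (fderiv ℝ (Function.uncurry u) (x, t)) (x, t) :=
    (h.differentiable (by simp) (x, t)).hasFDerivAt
  have h2 : HasDerivAt (fun y : ℝ => ((y, t) : ℝ × ℝ)) ((1 : ℝ), (0 : ℝ)) x :=
    (hasDerivAt_id x).prodMk (hasDerivAt_const x t)
  exact h1.comp_hasDerivAt x h2

lemma hasDerivAt_sliceT {u : ℝ → ℝ → ℝ} (h : SmoothR2 u) (x t : ℝ) :
    HasDerivAt (fun s => u x s)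
      (fderiv ℝ (Function.uncurry u) (x, t) (0, 1)) t := by
  have h1 : HasFDerivAt (Function.uncurry u) (fderiv ℝ (Function.uncurry u) (x, t)) (x, t) :=
    (h.differentiable (by simp) (x, t)).hasFDerivAt
  have h2 : HasDerivAt (fun s : ℝ => ((x, s) : ℝ × ℝ)) ((0 : ℝ), (1 : ℝ)) t :=
    (hasDerivAt_const t x).prodMk (hasDerivAt_id t)
  exact h1.comp_hasDerivAt t h2

lemma smoothR2_fderiv_apply {u : ℝ → ℝ → ℝ} (h : SmoothR2 u) (w : ℝ × ℝ) :
    ContDiff ℝ (⊤ : ℕ∞) (fun p : ℝ × ℝ => fderiv ℝ (Function.uncurry u) p w) := by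
  have h1 : ContDiff ℝ (⊤ : ℕ∞) (fderiv ℝ (Function.uncurry u)) := by
    apply h.fderiv_right
    exact_mod_cast le_top
  exact (ContinuousLinearMap.apply ℝ ℝ w).contDiff.comp h1

lemma smoothR2_pdX {u : ℝ → ℝ → ℝ} (h : SmoothR2 u) :
    SmoothR2 (fun x t => deriv (fun y => u y t) x) := by
  have key : ∀ p : ℝ × ℝ, deriv (fun y => u y p.2) p.1
      = fderiv ℝ (Function.uncurry u) p (1, 0) := fun p =>
    (hasDerivAt_sliceX h p.1 p.2).deriv
  have : Function.uncurry (fun x t => deriv (fun y => u y t) x)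
      = fun p : ℝ × ℝ => fderiv ℝ (Function.uncurry u) p (1, 0) := by
    funext p; exact key p
  rw [SmoothR2, this]
  exact smoothR2_fderiv_apply h _

lemma smoothR2_pdT {u : ℝ → ℝ → ℝ} (h : SmoothR2 u) :
    SmoothR2 (fun x t => deriv (fun s => u x s) t) := by
  have key : ∀ p : ℝ × ℝ, deriv (fun s => u p.1 s) p.2
      = fderiv ℝ (Function.uncurry u) p (0, 1) := fun p =>
    (hasDerivAt_sliceT h p.1 p.2).deriv
  have : Function.uncurry (fun x t => deriv (fun s => u x s) t)
      = fun p : ℝ × ℝ => fderiv ℝ (Function.uncurry u) p (0, 1) := by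
    funext p; exact key p
  rw [SmoothR2, this]
  exact smoothR2_fderiv_apply h _

lemma pdx_succ (j : ℕ) (u : ℝ → ℝ → ℝ) :
    pdx (j + 1) u = fun x t => deriv (fun y => pdx j u y t) x := by
  funext x t
  simp only [pdx, iteratedDeriv_succ]

lemma pdx_zero (u : ℝ → ℝ → ℝ) : pdx 0 u = u := by
  funext x t; simp [pdx]

lemma smoothR2_pdx {u : ℝ → ℝ → ℝ} (h : SmoothR2 u) (j : ℕ) :
    SmoothR2 (pdx j u) := by
  induction j with
  | zero => rw [pdx_zero]; exact h
  | succ n ih => rw [pdx_succ]; exact smoothR2_pdX ih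

lemma pdtx_zero (j : ℕ) (u : ℝ → ℝ → ℝ) : pdtx 0 j u = pdx j u := by
  funext x t; simp [pdtx]

lemma pdtx_succ (i j : ℕ) (u : ℝ → ℝ → ℝ) :
    pdtx (i + 1) j u = fun x t => deriv (fun s => pdtx i j u x s) t := by
  funext x t
  simp only [pdtx, iteratedDeriv_succ]

lemma smoothR2_pdtx {u : ℝ → ℝ → ℝ} (h : SmoothR2 u) (i j : ℕ) :
    SmoothR2 (pdtx i j u) := by
  induction i with
  | zero => rw [pdtx_zero]; exact smoothR2_pdx h j
  | succ n ih => rw [pdtx_succ]; exact smoothR2_pdT ih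

lemma smoothR2_continuous {u : ℝ → ℝ → ℝ} (h : SmoothR2 u) :
    Continuous (Function.uncurry u) := ContDiff.continuous h


lemma contDiff_iteratedDeriv_slice {U : ℝ → ℝ} (h : ContDiff ℝ (⊤ : ℕ∞) U) (j : ℕ) :
    ContDiff ℝ (⊤ : ℕ∞) (iteratedDeriv j U) := by
  rw [iteratedDeriv_eq_iterate]
  exact ContDiff.iterate_deriv j h

lemma hasDerivAt_iteratedDeriv {U : ℝ → ℝ} (h : ContDiff ℝ (⊤ : ℕ∞) U) (j : ℕ) (x : ℝ) :
    HasDerivAt (iteratedDeriv j U) (iteratedDeriv (j + 1) U x) x := by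
  have h1 := ((contDiff_iteratedDeriv_slice h j).differentiable
    (by simp) x).hasDerivAt
  rwa [← iteratedDeriv_succ] at h1

lemma hasDerivAt_pdx {u : ℝ → ℝ → ℝ} (h : SmoothR2 u) (j : ℕ) (x t : ℝ) :
    HasDerivAt (fun y => pdx j u y t) (pdx (j + 1) u x t) x := by
  have := hasDerivAt_iteratedDeriv (smoothR2_sliceX h t) j x
  simpa [pdx] using this

lemma bound_compact {h : ℝ → ℝ → ℝ} (hc : Continuous (Function.uncurry h)) (T : ℝ) :
    ∃ M, ∀ x t : ℝ, |x| ≤ 1 → t ∈ Icc 0 T → |h x t| ≤ M := by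
  obtain ⟨M, hM⟩ := ((isCompact_Icc (a := (-1:ℝ)) (b := 1)).prod
    (isCompact_Icc (a := (0:ℝ)) (b := T))).exists_bound_of_continuousOn hc.continuousOn
  refine ⟨M, fun x t hx ht => ?_⟩
  have := hM (x, t) ⟨abs_le.mp hx, ht⟩
  simpa [Function.uncurry, Real.norm_eq_abs] using this

lemma one_le_sq_of_abs {x : ℝ} (hx : 1 ≤ |x|) : 1 ≤ x ^ 2 := by
  nlinarith [sq_abs x]

lemma strip_decay {T : ℝ} {h : ℝ → ℝ → ℝ} (hsm : SmoothR2 h)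
    (hdec : ∃ C > 0, ∀ x t : ℝ, 1 ≤ |x| → t ∈ Icc 0 T → |h x t| ≤ C * |x| ^ (-(6:ℝ))) :
    ∃ C > 0, ∀ x t : ℝ, t ∈ Icc 0 T → |h x t| ≤ C / (1 + x ^ 2) ^ 3 := by
  obtain ⟨C₁, hC₁pos, hC₁⟩ := hdec
  obtain ⟨M, hM⟩ := bound_compact (smoothR2_continuous hsm) T
  set D := 8 * (C₁ + max M 0) + 1 with hD
  have hDpos : 0 < D := by positivity
  refine ⟨D, hDpos, fun x t ht => ?_⟩
  rcases le_or_gt 1 |x| with hx | hx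
  · have hx2 : 1 ≤ x ^ 2 := one_le_sq_of_abs hx
    have hxp : |x| ^ (-(6:ℝ)) = 1 / x ^ 6 := by
      rw [Real.rpow_neg (abs_nonneg x), show ((6:ℝ)) = ((6:ℕ):ℝ) by norm_num,
        Real.rpow_natCast, ← abs_pow, abs_of_nonneg (by positivity)
        , one_div]
    calc |h x t| ≤ C₁ * |x| ^ (-(6:ℝ)) := hC₁ x t hx ht
      _ = C₁ / x ^ 6 := by rw [hxp, mul_one_div]
      _ ≤ D / (1 + x ^ 2) ^ 3 := by
          have hx6pos : (0:ℝ) < x ^ 6 := by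
            have h0 : (0:ℝ) < x ^ 2 := by linarith
            calc (0:ℝ) < (x ^ 2) ^ 3 := pow_pos h0 3
              _ = x ^ 6 := by ring
          rw [div_le_div_iff₀ hx6pos (by positivity)]
          have hM0 : 0 ≤ max M 0 := le_max_right M 0
          have h23 : (1 + x ^ 2) ^ 3 ≤ (2 * x ^ 2) ^ 3 :=
            pow_le_pow_left₀ (by positivity) (by linarith) 3
          have hx6 : (0:ℝ) ≤ x ^ 6 := hx6pos.le
          calc C₁ * (1 + x ^ 2) ^ 3 ≤ C₁ * (2 * x ^ 2) ^ 3 :=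
                mul_le_mul_of_nonneg_left h23 hC₁pos.le
            _ = 8 * C₁ * x ^ 6 := by ring
            _ ≤ D * x ^ 6 := mul_le_mul_of_nonneg_right (by simp only [hD]; linarith) hx6
  · have hx2 : x ^ 2 ≤ 1 := by nlinarith [sq_abs x, abs_nonneg x]
    have h1 : |h x t| ≤ max M 0 := le_trans (hM x t hx.le ht) (le_max_left M 0)
    have h2 : (1 + x ^ 2) ^ 3 ≤ 8 := by
      calc (1 + x ^ 2) ^ 3 ≤ 2 ^ 3 := pow_le_pow_left₀ (by positivity) (by linarith) 3
        _ = 8 := by norm_num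
    calc |h x t| ≤ max M 0 := h1
      _ ≤ D / 8 := by rw [le_div_iff₀ (by norm_num)]; simp only [hD]; nlinarith [le_max_right M 0, hC₁pos]
      _ ≤ D / (1 + x ^ 2) ^ 3 := by
          apply div_le_div_of_nonneg_left hDpos.le (by positivity) h2


lemma pdtx_strip_decay {T : ℝ} {u : ℝ → ℝ → ℝ} (hu : SNegInfPlane (Icc 0 T) u) (i j : ℕ) :
    ∃ C > 0, ∀ x t : ℝ, t ∈ Icc 0 T → |pdtx i j u x t| ≤ C / (1 + x ^ 2) ^ 3 := by
  apply strip_decay (smoothR2_pdtx hu.1 i j)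
  obtain ⟨C, hC, hb⟩ := hu.2 (Icc 0 T) subset_rfl isCompact_Icc 6 i j
  refine ⟨C, hC, fun x t hx ht => ?_⟩
  have := hb x t hx ht
  norm_num at this ⊢
  exact this

lemma pdx_one (u : ℝ → ℝ → ℝ) : pdx 1 u = fun x t => deriv (fun y => u y t) x := by
  funext x t; simp [pdx, iteratedDeriv_one]

lemma abs_le_one_add_sq (x : ℝ) : |x| ≤ 1 + x ^ 2 := by
  nlinarith [sq_abs x, abs_nonneg x, sq_nonneg (|x| - 1)]

lemma fgrow_bounds {T : ℝ} {f : ℝ → ℝ → ℝ} (hf : FGrow f) :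
    ∃ C > 0, ∀ x t : ℝ, t ∈ Icc 0 T →
      |f x t| ≤ C * (1 + x ^ 2) ∧ |pdx 1 f x t| ≤ C ∧ |f x t| * |pdx 1 f x t| ≤ C := by
  obtain ⟨C₀, hC₀, h0⟩ := hf.2 (Icc 0 T) (fun x hx => hx.1) isCompact_Icc 0
  obtain ⟨C₁, hC₁, h1⟩ := hf.2 (Icc 0 T) (fun x hx => hx.1) isCompact_Icc 1
  obtain ⟨M₀, hM₀⟩ := bound_compact (smoothR2_continuous hf.1) T
  obtain ⟨M₁, hM₁⟩ := bound_compact (smoothR2_continuous (smoothR2_pdx hf.1 1)) T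
  set m₀ := max M₀ 0 with hm₀
  set m₁ := max M₁ 0 with hm₁
  have hm₀0 : 0 ≤ m₀ := le_max_right _ _
  have hm₁0 : 0 ≤ m₁ := le_max_right _ _
  set C := (C₀ + C₁ + C₀ * C₁) + (m₀ + m₁ + m₀ * m₁) + 1 with hCdef
  have hCpos : 0 < C := by positivity
  refine ⟨C, hCpos, fun x t ht => ?_⟩
  have hf0 : pdx 0 f = f := pdx_zero f
  rcases le_or_gt 1 |x| with hx | hx
  · have hxpos : (0:ℝ) < |x| := lt_of_lt_of_le one_pos hx
    have b0 : |f x t| ≤ C₀ * |x| ^ ((1:ℝ)/2) := by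
      have := h0 x t hx ht
      rw [hf0] at this
      simpa using this
    have b1 : |pdx 1 f x t| ≤ C₁ * |x| ^ (-(1:ℝ)/2) := by
      have := h1 x t hx ht
      norm_num at this ⊢
      convert this using 3
      try norm_num
    have half_le : |x| ^ ((1:ℝ)/2) ≤ 1 + x ^ 2 := by
      calc |x| ^ ((1:ℝ)/2) ≤ |x| ^ (1:ℝ) :=
            Real.rpow_le_rpow_of_exponent_le hx (by norm_num)
        _ = |x| := Real.rpow_one _
        _ ≤ 1 + x ^ 2 := abs_le_one_add_sq x
    have neghalf_le : |x| ^ (-(1:ℝ)/2) ≤ 1 :=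
      Real.rpow_le_one_of_one_le_of_nonpos hx (by norm_num)
    refine ⟨?_, ?_, ?_⟩
    · calc |f x t| ≤ C₀ * |x| ^ ((1:ℝ)/2) := b0
        _ ≤ C₀ * (1 + x ^ 2) := mul_le_mul_of_nonneg_left half_le hC₀.le
        _ ≤ C * (1 + x ^ 2) := by
            apply mul_le_mul_of_nonneg_right _ (by positivity)
            simp only [hCdef]; nlinarith
    · calc |pdx 1 f x t| ≤ C₁ * |x| ^ (-(1:ℝ)/2) := b1
        _ ≤ C₁ * 1 := mul_le_mul_of_nonneg_left neghalf_le hC₁.le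
        _ ≤ C := by simp only [hCdef]; nlinarith
    · calc |f x t| * |pdx 1 f x t|
          ≤ (C₀ * |x| ^ ((1:ℝ)/2)) * (C₁ * |x| ^ (-(1:ℝ)/2)) :=
            mul_le_mul b0 b1 (abs_nonneg _) (by positivity)
        _ = C₀ * C₁ * (|x| ^ ((1:ℝ)/2) * |x| ^ (-(1:ℝ)/2)) := by ring
        _ = C₀ * C₁ := by
            rw [← Real.rpow_add hxpos]
            norm_num
        _ ≤ C := by simp only [hCdef]; nlinarith
  · have c0 : |f x t| ≤ m₀ := le_trans (hM₀ x t hx.le ht) (le_max_left _ _)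
    have c1 : |pdx 1 f x t| ≤ m₁ := le_trans (hM₁ x t hx.le ht) (le_max_left _ _)
    refine ⟨?_, ?_, ?_⟩
    · calc |f x t| ≤ m₀ := c0
        _ ≤ C * 1 := by simp only [hCdef]; nlinarith
        _ ≤ C * (1 + x ^ 2) := by nlinarith [sq_nonneg x]
    · calc |pdx 1 f x t| ≤ m₁ := c1
        _ ≤ C := by simp only [hCdef]; nlinarith
    · calc |f x t| * |pdx 1 f x t| ≤ m₀ * m₁ :=
          mul_le_mul c0 c1 (abs_nonneg _) hm₀0
        _ ≤ C := by simp only [hCdef]; nlinarith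

lemma integrable_of_decay {h : ℝ → ℝ} (hm : Continuous h) {C : ℝ}
    (hb : ∀ x, |h x| ≤ C / (1 + x ^ 2)) : Integrable h := by
  apply (integrable_inv_one_add_sq.const_mul C).mono' hm.aestronglyMeasurable
  filter_upwards with x
  rw [Real.norm_eq_abs]
  calc |h x| ≤ C / (1 + x ^ 2) := hb x
    _ = C * (1 + x ^ 2)⁻¹ := div_eq_mul_inv _ _

lemma tendsto_decay_atTop {C : ℝ} :
    Tendsto (fun x : ℝ => C / (1 + x ^ 2)) atTop (𝓝 0) := by
  apply Tendsto.div_atTop tendsto_const_nhds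
  apply tendsto_atTop_add_const_left
  exact tendsto_pow_atTop two_ne_zero

lemma tendsto_decay_atBot {C : ℝ} :
    Tendsto (fun x : ℝ => C / (1 + x ^ 2)) atBot (𝓝 0) := by
  apply Tendsto.div_atTop tendsto_const_nhds
  apply tendsto_atTop_add_const_left
  have h1 : Tendsto (fun x : ℝ => |x| ^ 2) atBot atTop :=
    (tendsto_pow_atTop two_ne_zero).comp tendsto_abs_atBot_atTop
  exact h1.congr (fun x => sq_abs x)

lemma tendsto_zero_of_decay {h : ℝ → ℝ} {C : ℝ} (hb : ∀ x, |h x| ≤ C / (1 + x ^ 2)) :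
    Tendsto h atTop (𝓝 0) ∧ Tendsto h atBot (𝓝 0) :=
  ⟨squeeze_zero_norm (fun x => hb x) tendsto_decay_atTop,
   squeeze_zero_norm (fun x => hb x) tendsto_decay_atBot⟩

lemma integrable_const_div_one_add_sq (C : ℝ) :
    Integrable (fun x : ℝ => C / (1 + x ^ 2)) := by
  simpa [div_eq_mul_inv] using integrable_inv_one_add_sq.const_mul C

lemma integral_deriv_zero {G G' : ℝ → ℝ} (hd : ∀ x, HasDerivAt G (G' x) x)
    (hi : Integrable G') (h1 : Tendsto G atTop (𝓝 0)) (h2 : Tendsto G atBot (𝓝 0)) :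
    ∫ x, G' x = 0 := by
  have h3 : Tendsto (fun R : ℝ => ∫ x in (-R)..R, G' x) atTop (𝓝 (∫ x, G' x)) :=
    intervalIntegral_tendsto_integral hi (tendsto_neg_atTop_atBot) tendsto_id
  have h4 : (fun R : ℝ => ∫ x in (-R)..R, G' x) = fun R => G R - G (-R) := by
    funext R
    exact intervalIntegral.integral_eq_sub_of_hasDerivAt (fun x _ => hd x)
      hi.intervalIntegrable
  rw [h4] at h3
  have h5 : Tendsto (fun R : ℝ => G R - G (-R)) atTop (𝓝 (0 - 0)) :=
    h1.sub (h2.comp tendsto_neg_atTop_atBot)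
  have := tendsto_nhds_unique h3 h5
  simpa using this


/-- coefficient of `w_x` in the equation for `w = u - v`. -/
def AA (f u : ℝ → ℝ → ℝ) : ℝ → ℝ → ℝ :=
  fun x t => (u x t) ^ 2 + 2 * f x t * u x t + (f x t) ^ 2

/-- coefficient of `w` in the equation for `w = u - v`. -/
def BB (f u v : ℝ → ℝ → ℝ) : ℝ → ℝ → ℝ :=
  fun x t => (u x t + v x t) * pdx 1 v x t + 2 * f x t * pdx 1 v x t
    + (u x t + v x t) * pdx 1 f x t + 2 * f x t * pdx 1 f x t

/-- `∂ₓ AA - 2 BB`. -/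
def cc (f u v : ℝ → ℝ → ℝ) : ℝ → ℝ → ℝ :=
  fun x t => (2 * u x t * pdx 1 u x t + 2 * pdx 1 f x t * u x t
      + 2 * f x t * pdx 1 u x t + 2 * f x t * pdx 1 f x t) - 2 * BB f u v x t

/-- The "boundary term" whose `x`-derivative appears in the energy identity. -/
def GG (f u v : ℝ → ℝ → ℝ) : ℝ → ℝ → ℝ :=
  fun x t => 2 * (u x t - v x t) * (pdx 2 u x t - pdx 2 v x t)
    - (pdx 1 u x t - pdx 1 v x t) ^ 2 + AA f u x t * (u x t - v x t) ^ 2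

lemma hasDerivAt_slice0 {u : ℝ → ℝ → ℝ} (h : SmoothR2 u) (x t : ℝ) :
    HasDerivAt (fun y => u y t) (pdx 1 u x t) x := by
  have h1 := hasDerivAt_pdx h 0 x t
  simp only [pdx_zero] at h1
  simpa using h1

lemma pdtx_one_zero (u : ℝ → ℝ → ℝ) :
    pdtx 1 0 u = fun x t => deriv (fun s => u x s) t := by
  funext x t
  simp [pdtx, pdx_zero, iteratedDeriv_one, pdx]

lemma wt_eq {f g u v : ℝ → ℝ → ℝ} {T : ℝ}
    (hfs : SmoothR2 f) (hus : SmoothR2 u) (hvs : SmoothR2 v)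
    (hueq : GenMKdV f g u T) (hveq : GenMKdV f g v T) :
    ∀ x t : ℝ, t ∈ Icc 0 T →
      deriv (fun s => u x s) t - deriv (fun s => v x s) t
        = -((pdx 3 u x t - pdx 3 v x t)
            + AA f u x t * (pdx 1 u x t - pdx 1 v x t)
            + BB f u v x t * (u x t - v x t)) := by
  intro x t ht
  have hU := hasDerivAt_slice0 hus x t
  have hV := hasDerivAt_slice0 hvs x t
  have hF := hasDerivAt_slice0 hfs x t
  have e1 := hueq x t ht
  have e2 := hveq x t ht
  have r1 : deriv (fun y => u y t) x = pdx 1 u x t := hU.deriv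
  have r2 : deriv (fun y => v y t) x = pdx 1 v x t := hV.deriv
  have r3 : iteratedDeriv 3 (fun y => u y t) x = pdx 3 u x t := rfl
  have r4 : iteratedDeriv 3 (fun y => v y t) x = pdx 3 v x t := rfl
  have r5 : deriv (fun y => (u y t) ^ 2 * f y t) x
      = 2 * u x t * pdx 1 u x t * f x t + (u x t) ^ 2 * pdx 1 f x t := by
    rw [((hU.fun_pow 2).fun_mul hF).deriv]; push_cast; ring
  have r6 : deriv (fun y => (v y t) ^ 2 * f y t) x
      = 2 * v x t * pdx 1 v x t * f x t + (v x t) ^ 2 * pdx 1 f x t := by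
    rw [((hV.fun_pow 2).fun_mul hF).deriv]; push_cast; ring
  have r7 : deriv (fun y => (f y t) ^ 2 * u y t) x
      = 2 * f x t * pdx 1 f x t * u x t + (f x t) ^ 2 * pdx 1 u x t := by
    rw [((hF.fun_pow 2).fun_mul hU).deriv]; push_cast; ring
  have r8 : deriv (fun y => (f y t) ^ 2 * v y t) x
      = 2 * f x t * pdx 1 f x t * v x t + (f x t) ^ 2 * pdx 1 v x t := by
    rw [((hF.fun_pow 2).fun_mul hV).deriv]; push_cast; ring
  rw [r1, r3, r5, r7] at e1
  rw [r2, r4, r6, r8] at e2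
  simp only [AA, BB]
  linear_combination e1 - e2

lemma GG_hasDeriv {f g u v : ℝ → ℝ → ℝ} {T : ℝ}
    (hfs : SmoothR2 f) (hus : SmoothR2 u) (hvs : SmoothR2 v)
    (hueq : GenMKdV f g u T) (hveq : GenMKdV f g v T) :
    ∀ x t : ℝ, t ∈ Icc 0 T →
      HasDerivAt (fun y => GG f u v y t)
        (cc f u v x t * (u x t - v x t) ^ 2
          - 2 * (u x t - v x t)
            * (deriv (fun s => u x s) t - deriv (fun s => v x s) t)) x := by
  intro x t ht
  have key := wt_eq hfs hus hvs hueq hveq x t ht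
  have hU := hasDerivAt_slice0 hus x t
  have hV := hasDerivAt_slice0 hvs x t
  have hF := hasDerivAt_slice0 hfs x t
  have hU1 : HasDerivAt (fun y => pdx 1 u y t) (pdx 2 u x t) x := by
    simpa using hasDerivAt_pdx hus 1 x t
  have hV1 : HasDerivAt (fun y => pdx 1 v y t) (pdx 2 v x t) x := by
    simpa using hasDerivAt_pdx hvs 1 x t
  have hU2 : HasDerivAt (fun y => pdx 2 u y t) (pdx 3 u x t) x := by
    simpa using hasDerivAt_pdx hus 2 x t
  have hV2 : HasDerivAt (fun y => pdx 2 v y t) (pdx 3 v x t) x := by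
    simpa using hasDerivAt_pdx hvs 2 x t
  have hraw := ((((hU.fun_sub hV).const_mul 2).fun_mul (hU2.fun_sub hV2)).fun_sub
      ((hU1.fun_sub hV1).fun_pow 2)).fun_add
    ((((hU.fun_pow 2).fun_add ((hF.const_mul 2).fun_mul hU)).fun_add (hF.fun_pow 2)).fun_mul ((hU.fun_sub hV).fun_pow 2))
  have hGG : (fun y => GG f u v y t)
      = fun y => 2 * (u y t - v y t) * (pdx 2 u y t - pdx 2 v y t)
        - (pdx 1 u y t - pdx 1 v y t) ^ 2
        + ((u y t) ^ 2 + 2 * f y t * u y t + (f y t) ^ 2) * (u y t - v y t) ^ 2 := by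
    funext y; simp only [GG, AA]
  rw [hGG]
  refine hraw.congr_deriv ?_
  rw [key]
  simp only [cc, BB, AA]
  push_cast
  ring


lemma one_le_one_add_sq (x : ℝ) : (1:ℝ) ≤ 1 + x ^ 2 := by nlinarith [sq_nonneg x]

lemma decay_le_const {C x : ℝ} {l : ℕ} (hC : 0 ≤ C) : C / (1 + x ^ 2) ^ l ≤ C := by
  apply div_le_self hC
  exact one_le_pow₀ (one_le_one_add_sq x)

lemma decay_mono {C x : ℝ} (hC : 0 ≤ C) {l : ℕ} (hl : l ≠ 0) :
    C / (1 + x ^ 2) ^ l ≤ C / (1 + x ^ 2) := by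
  apply div_le_div_of_nonneg_left hC (by positivity)
  exact le_self_pow₀ (one_le_one_add_sq x) hl

lemma mul_bound_div {a b Ca Cb x : ℝ} {k l : ℕ} (hCa : 0 ≤ Ca) (hCb : 0 ≤ Cb)
    (ha : |a| ≤ Ca * (1 + x ^ 2) ^ k) (hb : |b| ≤ Cb / (1 + x ^ 2) ^ l)
    (hkl : k + 1 ≤ l) : |a * b| ≤ Ca * Cb / (1 + x ^ 2) := by
  have hs : (1:ℝ) ≤ 1 + x ^ 2 := one_le_one_add_sq x
  have hs0 : (0:ℝ) < 1 + x ^ 2 := by positivity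
  have h1 : |a * b| ≤ (Ca * (1 + x ^ 2) ^ k) * (Cb / (1 + x ^ 2) ^ l) := by
    rw [abs_mul]
    exact mul_le_mul ha hb (abs_nonneg b) (by positivity)
  refine h1.trans ?_
  have h3 : (1 + x ^ 2) ^ k / (1 + x ^ 2) ^ l ≤ 1 / (1 + x ^ 2) := by
    rw [div_le_div_iff₀ (by positivity) hs0]
    calc (1 + x ^ 2) ^ k * (1 + x ^ 2) = (1 + x ^ 2) ^ (k + 1) := (pow_succ _ _).symm
      _ ≤ (1 + x ^ 2) ^ l := pow_le_pow_right₀ hs hkl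
      _ = 1 * (1 + x ^ 2) ^ l := (one_mul _).symm
  calc (Ca * (1 + x ^ 2) ^ k) * (Cb / (1 + x ^ 2) ^ l)
      = Ca * Cb * ((1 + x ^ 2) ^ k / (1 + x ^ 2) ^ l) := by ring
    _ ≤ Ca * Cb * (1 / (1 + x ^ 2)) := mul_le_mul_of_nonneg_left h3 (by positivity)
    _ = Ca * Cb / (1 + x ^ 2) := by ring

lemma mul_const_decay {a b Ca Cb x : ℝ} {l : ℕ} (hCa : 0 ≤ Ca) (hCb : 0 ≤ Cb)
    (ha : |a| ≤ Ca) (hb : |b| ≤ Cb / (1 + x ^ 2) ^ l) (hl : 1 ≤ l) :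
    |a * b| ≤ Ca * Cb / (1 + x ^ 2) :=
  mul_bound_div (k := 0) hCa hCb (by simpa using ha) hb (by omega)

lemma sq_decay {a C x : ℝ} {l : ℕ} (hC : 0 ≤ C) (h : |a| ≤ C / (1 + x ^ 2) ^ l) :
    |a ^ 2| ≤ C ^ 2 / (1 + x ^ 2) ^ (2 * l) := by
  rw [abs_pow]
  calc |a| ^ 2 ≤ (C / (1 + x ^ 2) ^ l) ^ 2 := pow_le_pow_left₀ (abs_nonneg a) h 2
    _ = C ^ 2 / (1 + x ^ 2) ^ (2 * l) := by
        rw [div_pow, ← pow_mul, mul_comm l 2]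

end MKdVAux

set_option maxHeartbeats 1000000 in
open MKdVAux in
/-- **Theorem 1.1 (uniqueness).**  Under the same hypotheses on `f`, `g`, `u₀`, any two solutions
`u, v ∈ S^{-∞}(ℝ×[0,T])` of the generalized mKdV equation with the same initial data `u₀`
coincide on `ℝ × [0,T]`. -/
theorem generalized_mKdV_uniqueness
    (f g : ℝ → ℝ → ℝ) (u₀ : ℝ → ℝ) (T : ℝ) (hT : 0 < T)
    (hf : FGrow f) (hg : SNegInfPlane (Set.Ici 0) g) (hu₀ : SNegInfLine u₀)
    (u v : ℝ → ℝ → ℝ)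
    (hu : SNegInfPlane (Set.Icc 0 T) u) (hv : SNegInfPlane (Set.Icc 0 T) v)
    (hueq : GenMKdV f g u T) (hveq : GenMKdV f g v T)
    (hu0 : ∀ x : ℝ, u x 0 = u₀ x) (hv0 : ∀ x : ℝ, v x 0 = u₀ x) :
    ∀ x t : ℝ, t ∈ Set.Icc 0 T → u x t = v x t := by
  have hus : SmoothR2 u := hu.1
  have hvs : SmoothR2 v := hv.1
  have hfs : SmoothR2 f := hf.1
  -- decay constants
  obtain ⟨Cu0, hCu0, hu0'⟩ := pdtx_strip_decay hu 0 0
  obtain ⟨Cu1, hCu1, hu1'⟩ := pdtx_strip_decay hu 0 1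
  obtain ⟨Cu2, hCu2, hu2'⟩ := pdtx_strip_decay hu 0 2
  obtain ⟨Cut, hCut, hut'⟩ := pdtx_strip_decay hu 1 0
  obtain ⟨Cv0, hCv0, hv0'⟩ := pdtx_strip_decay hv 0 0
  obtain ⟨Cv1, hCv1, hv1'⟩ := pdtx_strip_decay hv 0 1
  obtain ⟨Cv2, hCv2, hv2'⟩ := pdtx_strip_decay hv 0 2
  obtain ⟨Cvt, hCvt, hvt'⟩ := pdtx_strip_decay hv 1 0
  obtain ⟨Cf, hCf, hfb⟩ := fgrow_bounds (T := T) hf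
  -- restated decay bounds
  have bu0 : ∀ x t : ℝ, t ∈ Set.Icc 0 T → |u x t| ≤ Cu0 / (1 + x ^ 2) ^ 3 := by
    intro x t ht; have := hu0' x t ht; rwa [pdtx_zero, pdx_zero] at this
  have bv0 : ∀ x t : ℝ, t ∈ Set.Icc 0 T → |v x t| ≤ Cv0 / (1 + x ^ 2) ^ 3 := by
    intro x t ht; have := hv0' x t ht; rwa [pdtx_zero, pdx_zero] at this
  have bu1 : ∀ x t : ℝ, t ∈ Set.Icc 0 T → |pdx 1 u x t| ≤ Cu1 / (1 + x ^ 2) ^ 3 := by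
    intro x t ht; have := hu1' x t ht; rwa [pdtx_zero] at this
  have bv1 : ∀ x t : ℝ, t ∈ Set.Icc 0 T → |pdx 1 v x t| ≤ Cv1 / (1 + x ^ 2) ^ 3 := by
    intro x t ht; have := hv1' x t ht; rwa [pdtx_zero] at this
  have bu2 : ∀ x t : ℝ, t ∈ Set.Icc 0 T → |pdx 2 u x t| ≤ Cu2 / (1 + x ^ 2) ^ 3 := by
    intro x t ht; have := hu2' x t ht; rwa [pdtx_zero] at this
  have bv2 : ∀ x t : ℝ, t ∈ Set.Icc 0 T → |pdx 2 v x t| ≤ Cv2 / (1 + x ^ 2) ^ 3 := by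
    intro x t ht; have := hv2' x t ht; rwa [pdtx_zero] at this
  have but : ∀ x t : ℝ, t ∈ Set.Icc 0 T →
      |deriv (fun s => u x s) t| ≤ Cut / (1 + x ^ 2) ^ 3 := by
    intro x t ht; have := hut' x t ht; rwa [pdtx_one_zero] at this
  have bvt : ∀ x t : ℝ, t ∈ Set.Icc 0 T →
      |deriv (fun s => v x s) t| ≤ Cvt / (1 + x ^ 2) ^ 3 := by
    intro x t ht; have := hvt' x t ht; rwa [pdtx_one_zero] at this
  -- difference bounds
  have bw0 : ∀ x t : ℝ, t ∈ Set.Icc 0 T →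
      |u x t - v x t| ≤ (Cu0 + Cv0) / (1 + x ^ 2) ^ 3 := by
    intro x t ht
    calc |u x t - v x t| ≤ |u x t| + |v x t| := abs_sub _ _
      _ ≤ Cu0 / (1 + x ^ 2) ^ 3 + Cv0 / (1 + x ^ 2) ^ 3 :=
          add_le_add (bu0 x t ht) (bv0 x t ht)
      _ = (Cu0 + Cv0) / (1 + x ^ 2) ^ 3 := by ring
  have bw1 : ∀ x t : ℝ, t ∈ Set.Icc 0 T →
      |pdx 1 u x t - pdx 1 v x t| ≤ (Cu1 + Cv1) / (1 + x ^ 2) ^ 3 := by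
    intro x t ht
    calc |pdx 1 u x t - pdx 1 v x t| ≤ |pdx 1 u x t| + |pdx 1 v x t| := abs_sub _ _
      _ ≤ Cu1 / (1 + x ^ 2) ^ 3 + Cv1 / (1 + x ^ 2) ^ 3 :=
          add_le_add (bu1 x t ht) (bv1 x t ht)
      _ = (Cu1 + Cv1) / (1 + x ^ 2) ^ 3 := by ring
  have bw2 : ∀ x t : ℝ, t ∈ Set.Icc 0 T →
      |pdx 2 u x t - pdx 2 v x t| ≤ (Cu2 + Cv2) / (1 + x ^ 2) ^ 3 := by
    intro x t ht
    calc |pdx 2 u x t - pdx 2 v x t| ≤ |pdx 2 u x t| + |pdx 2 v x t| := abs_sub _ _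
      _ ≤ Cu2 / (1 + x ^ 2) ^ 3 + Cv2 / (1 + x ^ 2) ^ 3 :=
          add_le_add (bu2 x t ht) (bv2 x t ht)
      _ = (Cu2 + Cv2) / (1 + x ^ 2) ^ 3 := by ring
  have bwt : ∀ x t : ℝ, t ∈ Set.Icc 0 T →
      |deriv (fun s => u x s) t - deriv (fun s => v x s) t|
        ≤ (Cut + Cvt) / (1 + x ^ 2) ^ 3 := by
    intro x t ht
    calc |deriv (fun s => u x s) t - deriv (fun s => v x s) t|
        ≤ |deriv (fun s => u x s) t| + |deriv (fun s => v x s) t| := abs_sub _ _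
      _ ≤ Cut / (1 + x ^ 2) ^ 3 + Cvt / (1 + x ^ 2) ^ 3 :=
          add_le_add (but x t ht) (bvt x t ht)
      _ = (Cut + Cvt) / (1 + x ^ 2) ^ 3 := by ring
  -- continuity of slices
  have slice_cont : ∀ (h : ℝ → ℝ → ℝ), SmoothR2 h → ∀ t, Continuous (fun x => h x t) :=
    fun h hs t => (smoothR2_continuous hs).comp (continuous_id.prodMk continuous_const)
  have slice_contT : ∀ (h : ℝ → ℝ → ℝ), SmoothR2 h → ∀ x, Continuous (fun t => h x t) :=
    fun h hs x => (smoothR2_continuous hs).comp (continuous_const.prodMk continuous_id)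
  have cont_w : ∀ t, Continuous (fun x => u x t - v x t) :=
    fun t => (slice_cont u hus t).sub (slice_cont v hvs t)
  have cont_u1 : ∀ t, Continuous (fun x => pdx 1 u x t) :=
    fun t => slice_cont _ (smoothR2_pdx hus 1) t
  have cont_v1 : ∀ t, Continuous (fun x => pdx 1 v x t) :=
    fun t => slice_cont _ (smoothR2_pdx hvs 1) t
  have cont_f1 : ∀ t, Continuous (fun x => pdx 1 f x t) :=
    fun t => slice_cont _ (smoothR2_pdx hfs 1) t
  have cont_ut : ∀ t, Continuous (fun x => deriv (fun s => u x s) t) := by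
    intro t
    have := slice_cont _ (smoothR2_pdtx hus 1 0) t
    rwa [pdtx_one_zero] at this
  have cont_vt : ∀ t, Continuous (fun x => deriv (fun s => v x s) t) := by
    intro t
    have := slice_cont _ (smoothR2_pdtx hvs 1 0) t
    rwa [pdtx_one_zero] at this
  have cont_c : ∀ t, Continuous (fun x => cc f u v x t) := by
    intro t
    have cu := slice_cont u hus t
    have cv := slice_cont v hvs t
    have cf := slice_cont f hfs t
    have cu1 := cont_u1 t
    have cv1 := cont_v1 t
    have cf1 := cont_f1 t
    have hBcont : Continuous (fun x => BB f u v x t) := by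
      simp only [BB]
      exact ((((cu.add cv).mul cv1).add
        ((continuous_const.mul cf).mul cv1)).add
        ((cu.add cv).mul cf1)).add ((continuous_const.mul cf).mul cf1)
    simp only [cc]
    apply Continuous.sub
    · exact ((((continuous_const.mul cu).mul cu1).add
        ((continuous_const.mul cf1).mul cu)).add
        ((continuous_const.mul cf).mul cu1)).add ((continuous_const.mul cf).mul cf1)
    · exact continuous_const.mul hBcont
  -- uniform bound for the coefficient cc
  set K := 2*(Cu0*Cu1) + 2*(Cf*Cu0) + 2*(Cf*Cu1) + 6*Cf + 2*(Cu0*Cv1) + 2*(Cv0*Cv1)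
      + 4*(Cf*Cv1) + 2*(Cu0*Cf) + 2*(Cv0*Cf) + 1 with hKdef
  have hK0 : 0 < K := by rw [hKdef]; positivity
  have hcb : ∀ x t : ℝ, t ∈ Set.Icc 0 T → |cc f u v x t| ≤ K := by
    intro x t ht
    have pu0 : |u x t| ≤ Cu0 := (bu0 x t ht).trans (decay_le_const hCu0.le)
    have pu1 : |pdx 1 u x t| ≤ Cu1 := (bu1 x t ht).trans (decay_le_const hCu1.le)
    have pv0 : |v x t| ≤ Cv0 := (bv0 x t ht).trans (decay_le_const hCv0.le)
    have pv1 : |pdx 1 v x t| ≤ Cv1 := (bv1 x t ht).trans (decay_le_const hCv1.le)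
    obtain ⟨pf, pf1, pff⟩ := hfb x t ht
    have q1 : |u x t * pdx 1 u x t| ≤ Cu0 * Cu1 := by
      rw [abs_mul]; exact mul_le_mul pu0 pu1 (abs_nonneg _) hCu0.le
    have q2 : |pdx 1 f x t * u x t| ≤ Cf * Cu0 := by
      rw [abs_mul]; exact mul_le_mul pf1 pu0 (abs_nonneg _) hCf.le
    have q3 : |f x t * pdx 1 u x t| ≤ Cf * Cu1 := by
      refine (mul_bound_div (k := 1) hCf.le hCu1.le (by simpa [pow_one] using pf)
        (bu1 x t ht) (by omega)).trans ?_
      exact div_le_self (by positivity) (one_le_one_add_sq x)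
    have q4 : |f x t * pdx 1 f x t| ≤ Cf := by rw [abs_mul]; exact pff
    have q5 : |u x t * pdx 1 v x t| ≤ Cu0 * Cv1 := by
      rw [abs_mul]; exact mul_le_mul pu0 pv1 (abs_nonneg _) hCu0.le
    have q6 : |v x t * pdx 1 v x t| ≤ Cv0 * Cv1 := by
      rw [abs_mul]; exact mul_le_mul pv0 pv1 (abs_nonneg _) hCv0.le
    have q7 : |f x t * pdx 1 v x t| ≤ Cf * Cv1 := by
      refine (mul_bound_div (k := 1) hCf.le hCv1.le (by simpa [pow_one] using pf)
        (bv1 x t ht) (by omega)).trans ?_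
      exact div_le_self (by positivity) (one_le_one_add_sq x)
    have q8 : |u x t * pdx 1 f x t| ≤ Cu0 * Cf := by
      rw [abs_mul]; exact mul_le_mul pu0 pf1 (abs_nonneg _) hCu0.le
    have q9 : |v x t * pdx 1 f x t| ≤ Cv0 * Cf := by
      rw [abs_mul]; exact mul_le_mul pv0 pf1 (abs_nonneg _) hCv0.le
    simp only [cc, BB, hKdef]
    rw [abs_le]
    obtain ⟨a1, b1⟩ := abs_le.mp q1
    obtain ⟨a2, b2⟩ := abs_le.mp q2
    obtain ⟨a3, b3⟩ := abs_le.mp q3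
    obtain ⟨a4, b4⟩ := abs_le.mp q4
    obtain ⟨a5, b5⟩ := abs_le.mp q5
    obtain ⟨a6, b6⟩ := abs_le.mp q6
    obtain ⟨a7, b7⟩ := abs_le.mp q7
    obtain ⟨a8, b8⟩ := abs_le.mp q8
    obtain ⟨a9, b9⟩ := abs_le.mp q9
    constructor <;> linarith
  -- growth bound for AA
  set CA := Cu0^2 + 2*Cf*Cu0 + Cf^2 with hCAdef
  have hCA0 : 0 < CA := by rw [hCAdef]; positivity
  have hAb : ∀ x t : ℝ, t ∈ Set.Icc 0 T → |AA f u x t| ≤ CA * (1 + x ^ 2) ^ 2 := by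
    intro x t ht
    have pu0 : |u x t| ≤ Cu0 := (bu0 x t ht).trans (decay_le_const hCu0.le)
    obtain ⟨pf, _, _⟩ := hfb x t ht
    have h1 : |(u x t)^2| ≤ Cu0^2 := by
      rw [abs_pow]; exact pow_le_pow_left₀ (abs_nonneg _) pu0 2
    have h2 : |2 * f x t * u x t| ≤ 2*(Cf*(1+x^2))*Cu0 := by
      rw [abs_mul, abs_mul, abs_two]
      exact mul_le_mul (mul_le_mul le_rfl pf (abs_nonneg _) (by norm_num)) pu0
        (abs_nonneg _) (by positivity)
    have h3 : |(f x t)^2| ≤ (Cf*(1+x^2))^2 := by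
      rw [abs_pow]; exact pow_le_pow_left₀ (abs_nonneg _) pf 2
    have tri : |AA f u x t| ≤ |(u x t)^2| + |2 * f x t * u x t| + |(f x t)^2| := by
      simp only [AA]; exact abs_add_three _ _ _
    refine tri.trans ?_
    have hs := one_le_one_add_sq x
    have e1 : (1:ℝ) ≤ (1+x^2)^2 := one_le_pow₀ hs
    have e2 : (1+x^2) ≤ (1+x^2)^2 := le_self_pow₀ hs (by norm_num)
    rw [hCAdef]
    nlinarith [mul_le_mul_of_nonneg_left e1 (by positivity : (0:ℝ) ≤ Cu0^2),
      mul_le_mul_of_nonneg_left e2 (by positivity : (0:ℝ) ≤ 2*Cf*Cu0),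
      sq_nonneg (1+x^2), hCf.le, hCu0.le]
  -- pointwise bound for GG
  set DG := (2*(Cu0+Cv0))*(Cu2+Cv2) + (Cu1+Cv1)^2 + CA*(Cu0+Cv0)^2 with hDGdef
  have hGb : ∀ x t : ℝ, t ∈ Set.Icc 0 T → |GG f u v x t| ≤ DG / (1 + x ^ 2) := by
    intro x t ht
    have hw0 : (0:ℝ) ≤ Cu0 + Cv0 := by positivity
    have t1 : |2*(u x t - v x t) * (pdx 2 u x t - pdx 2 v x t)|
        ≤ (2*(Cu0+Cv0))*(Cu2+Cv2) / (1 + x ^ 2) := by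
      apply mul_const_decay (l := 3) (by positivity) (by positivity) ?_ (bw2 x t ht) (by omega)
      calc |2*(u x t - v x t)| = 2 * |u x t - v x t| := by rw [abs_mul, abs_two]
        _ ≤ 2 * ((Cu0+Cv0)/(1+x^2)^3) := by
            have := bw0 x t ht; linarith
        _ ≤ 2 * (Cu0+Cv0) := by
            have := decay_le_const (x := x) (l := 3) hw0; linarith
    have t2 : |(pdx 1 u x t - pdx 1 v x t)^2| ≤ (Cu1+Cv1)^2 / (1 + x ^ 2) := by
      have h := sq_decay (by positivity) (bw1 x t ht)
      refine h.trans ?_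
      exact decay_mono (by positivity) (by norm_num)
    have hwsq : |(u x t - v x t)^2| ≤ (Cu0+Cv0)^2 / (1 + x ^ 2) ^ (2*3) :=
      sq_decay (by positivity) (bw0 x t ht)
    have t3 : |AA f u x t * (u x t - v x t)^2| ≤ CA*(Cu0+Cv0)^2 / (1 + x ^ 2) :=
      mul_bound_div (k := 2) (l := 2*3) hCA0.le (by positivity) (hAb x t ht) hwsq (by omega)
    have tri : |GG f u v x t|
        ≤ |2*(u x t - v x t) * (pdx 2 u x t - pdx 2 v x t)|
          + |(pdx 1 u x t - pdx 1 v x t)^2|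
          + |AA f u x t * (u x t - v x t)^2| := by
      simp only [GG]
      calc |2 * (u x t - v x t) * (pdx 2 u x t - pdx 2 v x t)
            - (pdx 1 u x t - pdx 1 v x t) ^ 2 + AA f u x t * (u x t - v x t) ^ 2|
          ≤ |2 * (u x t - v x t) * (pdx 2 u x t - pdx 2 v x t)
            - (pdx 1 u x t - pdx 1 v x t) ^ 2| + |AA f u x t * (u x t - v x t) ^ 2| :=
            abs_add_le _ _
        _ ≤ _ := by
            have := abs_sub (2 * (u x t - v x t) * (pdx 2 u x t - pdx 2 v x t))
              ((pdx 1 u x t - pdx 1 v x t) ^ 2)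
            linarith
    refine tri.trans ?_
    rw [hDGdef]
    have := t1; have := t2; have := t3
    have hsplit : ((2*(Cu0+Cv0))*(Cu2+Cv2) + (Cu1+Cv1)^2 + CA*(Cu0+Cv0)^2) / (1+x^2)
        = (2*(Cu0+Cv0))*(Cu2+Cv2)/(1+x^2) + (Cu1+Cv1)^2/(1+x^2) + CA*(Cu0+Cv0)^2/(1+x^2) := by
      ring
    rw [hsplit]
    linarith
  -- integrand bounds
  have bWsq : ∀ x t : ℝ, t ∈ Set.Icc 0 T →
      |(u x t - v x t)^2| ≤ (Cu0+Cv0)^2 / (1 + x ^ 2) := by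
    intro x t ht
    exact (sq_decay (by positivity) (bw0 x t ht)).trans
      (decay_mono (by positivity) (by norm_num))
  have b2wwt : ∀ x t : ℝ, t ∈ Set.Icc 0 T →
      |2*(u x t - v x t)*(deriv (fun s => u x s) t - deriv (fun s => v x s) t)|
        ≤ (2*(Cu0+Cv0))*(Cut+Cvt) / (1 + x ^ 2) := by
    intro x t ht
    apply mul_const_decay (l := 3) (by positivity) (by positivity) ?_ (bwt x t ht) (by omega)
    calc |2*(u x t - v x t)| = 2 * |u x t - v x t| := by rw [abs_mul, abs_two]
      _ ≤ 2 * ((Cu0+Cv0)/(1+x^2)^3) := by have := bw0 x t ht; linarith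
      _ ≤ 2 * (Cu0+Cv0) := by
          have := decay_le_const (x := x) (l := 3) (by positivity : (0:ℝ) ≤ Cu0 + Cv0)
          linarith
  have bcWsq : ∀ x t : ℝ, t ∈ Set.Icc 0 T →
      |cc f u v x t * (u x t - v x t)^2| ≤ K*(Cu0+Cv0)^2 / (1 + x ^ 2) := by
    intro x t ht
    exact mul_const_decay (l := 2*3) hK0.le (by positivity) (hcb x t ht)
      (sq_decay (by positivity) (bw0 x t ht)) (by omega)
  -- integrability
  have intWsq : ∀ t ∈ Set.Icc 0 T, Integrable (fun x => (u x t - v x t)^2) :=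
    fun t ht => integrable_of_decay ((cont_w t).pow 2) (fun x => bWsq x t ht)
  have int2wwt : ∀ t ∈ Set.Icc 0 T, Integrable (fun x =>
      2*(u x t - v x t)*(deriv (fun s => u x s) t - deriv (fun s => v x s) t)) :=
    fun t ht => integrable_of_decay
      ((continuous_const.mul (cont_w t)).mul ((cont_ut t).sub (cont_vt t)))
      (fun x => b2wwt x t ht)
  have intcWsq : ∀ t ∈ Set.Icc 0 T, Integrable (fun x => cc f u v x t * (u x t - v x t)^2) :=
    fun t ht => integrable_of_decay ((cont_c t).mul ((cont_w t).pow 2))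
      (fun x => bcWsq x t ht)
  -- energy
  set E : ℝ → ℝ := fun t => ∫ x : ℝ, (u x t - v x t)^2 with hEdef
  have hE0 : E 0 = 0 := by
    have hz : (fun x : ℝ => (u x 0 - v x 0)^2) = fun _ => (0:ℝ) := by
      funext x; rw [hu0 x, hv0 x]; ring
    simp only [hEdef, hz, integral_zero]
  have hEnn : ∀ t, 0 ≤ E t := fun t => integral_nonneg fun x => sq_nonneg _
  have hEcont : ContinuousOn E (Set.Icc 0 T) := by
    rw [hEdef]
    apply MeasureTheory.continuousOn_of_dominated
      (F := fun t x => (u x t - v x t)^2) (bound := fun x => (Cu0+Cv0)^2/(1+x^2))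
    · intro t ht; exact ((cont_w t).pow 2).aestronglyMeasurable
    · intro t ht
      exact ae_of_all _ fun x => by rw [Real.norm_eq_abs]; exact bWsq x t ht
    · exact integrable_const_div_one_add_sq _
    · exact ae_of_all _ fun x =>
        (((slice_contT u hus x).sub (slice_contT v hvs x)).pow 2).continuousOn
  -- derivative of the energy
  have hEderiv : ∀ t ∈ Set.Ioo 0 T,
      HasDerivAt E (∫ x : ℝ, cc f u v x t * (u x t - v x t)^2) t := by
    intro t ht
    have htI : t ∈ Set.Icc 0 T := Set.mem_Icc_of_Ioo ht
    have hε0 : 0 < min t (T - t) := lt_min ht.1 (sub_pos.2 ht.2)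
    have hball : Metric.ball t (min t (T - t)) ⊆ Set.Icc 0 T := by
      intro s hs
      rw [Metric.mem_ball, Real.dist_eq] at hs
      have h1 := abs_lt.mp hs
      have h2 := min_le_left t (T - t)
      have h3 := min_le_right t (T - t)
      constructor
      · linarith
      · linarith
    have hdiff : ∀ x : ℝ, ∀ s ∈ Metric.ball t (min t (T-t)),
        HasDerivAt (fun s' => (u x s' - v x s')^2)
          (2*(u x s - v x s)*(deriv (fun r => u x r) s - deriv (fun r => v x r) s)) s := by
      intro x s _
      have hdu : HasDerivAt (fun r => u x r) (deriv (fun r => u x r) s) s :=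
        ((smoothR2_sliceT hus x).differentiable (by simp) s).hasDerivAt
      have hdv : HasDerivAt (fun r => v x r) (deriv (fun r => v x r) s) s :=
        ((smoothR2_sliceT hvs x).differentiable (by simp) s).hasDerivAt
      have h2 := (hdu.fun_sub hdv).fun_pow 2
      refine h2.congr_deriv ?_
      push_cast
      ring
    have main := (hasDerivAt_integral_of_dominated_loc_of_deriv_le (μ := volume)
      (F := fun s x => (u x s - v x s)^2)
      (F' := fun s x =>
        2*(u x s - v x s)*(deriv (fun r => u x r) s - deriv (fun r => v x r) s))
      (x₀ := t) (bound := fun x => (2*(Cu0+Cv0))*(Cut+Cvt)/(1+x^2)) (Metric.ball_mem_nhds t hε0)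
      (Eventually.of_forall fun s => ((cont_w s).pow 2).aestronglyMeasurable)
      (intWsq t htI)
      (((continuous_const.mul (cont_w t)).mul
        ((cont_ut t).sub (cont_vt t))).aestronglyMeasurable)
      (ae_of_all _ fun x s hs => by
        rw [Real.norm_eq_abs]; exact b2wwt x s (hball hs))
      (integrable_const_div_one_add_sq _)
      (ae_of_all _ fun x s hs => hdiff x s hs)).2
    have heq : (∫ x : ℝ,
          2*(u x t - v x t)*(deriv (fun r => u x r) t - deriv (fun r => v x r) t))
        = ∫ x : ℝ, cc f u v x t * (u x t - v x t)^2 := by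
      have hGd : ∀ x : ℝ, HasDerivAt (fun y => GG f u v y t)
          (cc f u v x t * (u x t - v x t)^2
            - 2*(u x t - v x t)*(deriv (fun s => u x s) t - deriv (fun s => v x s) t)) x :=
        fun x => GG_hasDeriv hfs hus hvs hueq hveq x t htI
      have hint : Integrable (fun x : ℝ => cc f u v x t * (u x t - v x t)^2
          - 2*(u x t - v x t)*(deriv (fun s => u x s) t - deriv (fun s => v x s) t)) :=
        (intcWsq t htI).sub (int2wwt t htI)
      have htend := tendsto_zero_of_decay (fun x => hGb x t htI)
      have hzero := integral_deriv_zero hGd hint htend.1 htend.2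
      have hsplit : (fun x : ℝ =>
            2*(u x t - v x t)*(deriv (fun s => u x s) t - deriv (fun s => v x s) t))
          = fun x => cc f u v x t * (u x t - v x t)^2
            - (cc f u v x t * (u x t - v x t)^2
              - 2*(u x t - v x t)*(deriv (fun s => u x s) t - deriv (fun s => v x s) t)) := by
        funext x; ring
      rw [hsplit, integral_sub (intcWsq t htI) hint, hzero, sub_zero]
    rw [hEdef, ← heq]
    exact main
  -- Gronwall: the energy vanishes
  have hEzero : ∀ t ∈ Set.Icc 0 T, E t = 0 := by
    intro t ht
    rcases eq_or_lt_of_le ht.1 with h0 | ht0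
    · rw [← h0]; exact hE0
    · refine le_antisymm ?_ (hEnn t)
      have hle : ∀ a ∈ Set.Ioc 0 t, E t ≤ E a * Real.exp (K * T) := by
        intro a ha
        have hsub : Set.Icc a t ⊆ Set.Icc 0 T := Set.Icc_subset_Icc ha.1.le ht.2
        have hbound : ∀ s ∈ Set.Ico a t,
            ‖∫ x : ℝ, cc f u v x s * (u x s - v x s)^2‖ ≤ K * ‖E s‖ + 0 := by
          intro s hs
          have hsI : s ∈ Set.Icc 0 T := ⟨le_trans ha.1.le hs.1, le_trans hs.2.le ht.2⟩
          rw [Real.norm_eq_abs, Real.norm_eq_abs, abs_of_nonneg (hEnn s), add_zero]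
          calc |∫ x : ℝ, cc f u v x s * (u x s - v x s)^2|
              ≤ ∫ x : ℝ, |cc f u v x s * (u x s - v x s)^2| := by
                simpa only [Real.norm_eq_abs] using norm_integral_le_integral_norm
                  (μ := volume) (fun x => cc f u v x s * (u x s - v x s)^2)
            _ ≤ ∫ x : ℝ, K * (u x s - v x s)^2 := by
                apply integral_mono (intcWsq s hsI).abs ((intWsq s hsI).const_mul K)
                intro y
                show |cc f u v y s * (u y s - v y s)^2| ≤ K * (u y s - v y s)^2
                rw [abs_mul, abs_of_nonneg (sq_nonneg (u y s - v y s))]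
                exact mul_le_mul_of_nonneg_right (hcb y s hsI) (sq_nonneg _)
            _ = K * E s := by
                simp only [hEdef]
                exact integral_const_mul K _
        have hgr := norm_le_gronwallBound_of_norm_deriv_right_le
          (f := E) (f' := fun s => ∫ x : ℝ, cc f u v x s * (u x s - v x s)^2)
          (δ := ‖E a‖) (K := K) (ε := 0) (a := a) (b := t)
          (hEcont.mono hsub)
          (fun s hs => (hEderiv s
            ⟨lt_of_lt_of_le ha.1 hs.1, lt_of_lt_of_le hs.2 ht.2⟩).hasDerivWithinAt)
          le_rfl hbound t (Set.right_mem_Icc.mpr ha.2)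
        rw [gronwallBound_ε0, Real.norm_of_nonneg (hEnn t), Real.norm_of_nonneg (hEnn a)] at hgr
        refine hgr.trans ?_
        apply mul_le_mul_of_nonneg_left _ (hEnn a)
        apply Real.exp_le_exp.mpr
        apply mul_le_mul_of_nonneg_left _ hK0.le
        have := ha.1
        have := ht.2
        linarith
      have hIocT : Set.Ioc (0:ℝ) T ∈ 𝓝[>] (0:ℝ) := Ioc_mem_nhdsGT_of_mem ⟨le_refl 0, hT⟩
      have hIoct : Set.Ioc (0:ℝ) t ∈ 𝓝[>] (0:ℝ) := Ioc_mem_nhdsGT_of_mem ⟨le_refl 0, ht0⟩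
      have hEt0 : Tendsto E (𝓝[>] (0:ℝ)) (𝓝 0) := by
        have h1 : ContinuousWithinAt E (Set.Icc 0 T) 0 := hEcont 0 ⟨le_refl 0, hT.le⟩
        have h2 : 𝓝[>] (0:ℝ) ≤ 𝓝[Set.Icc 0 T] (0:ℝ) :=
          nhdsWithin_le_of_mem (mem_of_superset hIocT Set.Ioc_subset_Icc_self)
        have h3 := h1.tendsto.mono_left h2
        rwa [hE0] at h3
      have hlim2 : Tendsto (fun a => E a * Real.exp (K*T)) (𝓝[>] (0:ℝ)) (𝓝 0) := by
        have := hEt0.mul_const (Real.exp (K*T))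
        simpa using this
      exact ge_of_tendsto hlim2 (eventually_of_mem hIoct hle)
  -- conclusion
  intro x t ht
  have h0 := hEzero t ht
  simp only [hEdef] at h0
  have hae := (integral_eq_zero_iff_of_nonneg (fun y => sq_nonneg _) (intWsq t ht)).mp h0
  have hfun : (fun y => (u y t - v y t)^2) = (fun _ => (0:ℝ)) :=
    (Continuous.ae_eq_iff_eq volume ((cont_w t).pow 2) continuous_const).mp hae
  have hx := congrFun hfun x
  have hz : u x t - v x t = 0 := pow_eq_zero_iff (n := 2) (by norm_num) |>.mp hx
  linarith
end
end

section
/- Fix a mesh size h > 0. If ρ is a mesh function with ρ ∈ L²_h and D₊³ρ ∈ L²_h, then (D₊²D₋ρ, ρ)_{L²_h} ≥ 0. -/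
noncomputable section

open Set Filter

/-- Forward discrete derivative `D₊u(n) = (u(n+1) - u(n))/h`. -/
def Dp (h : ℝ) (u : ℤ → ℝ) : ℤ → ℝ := fun n => (u (n + 1) - u n) / h

/-- Backward discrete derivative `D₋u(n) = (u(n) - u(n-1))/h`. -/
def Dm (h : ℝ) (u : ℤ → ℝ) : ℤ → ℝ := fun n => (u n - u (n - 1)) / h

/-- Central discrete derivative `D₀u(n) = (u(n+1) - u(n-1))/(2h)`. -/
def D0 (h : ℝ) (u : ℤ → ℝ) : ℤ → ℝ := fun n => (u (n + 1) - u (n - 1)) / (2 * h)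

/-- Shift operator `Eu(n) = u(n+1)`. -/
def Esh (u : ℤ → ℝ) : ℤ → ℝ := fun n => u (n + 1)

/-- Membership in `L²_h`: square-summability of the mesh function. -/
def MemL2 (u : ℤ → ℝ) : Prop := Summable fun n : ℤ => (u n) ^ 2

/-- The discrete inner product `(u,v)_{L²_h} = Σₙ u(n)·v(n)·h`. -/
def ip2 (h : ℝ) (u v : ℤ → ℝ) : ℝ := ∑' n : ℤ, u n * v n * h

/-- The discrete `L²_h` norm. -/
def nrm (h : ℝ) (u : ℤ → ℝ) : ℝ := Real.sqrt (∑' n : ℤ, (u n) ^ 2 * h)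

/-- The mesh weight `⟨x⟩ = √(x² + 1)` evaluated at the mesh point `x = n·h`. -/
def jp (h : ℝ) (n : ℤ) : ℝ := Real.sqrt (((n : ℝ) * h) ^ 2 + 1)


lemma sq_shift (ρ : ℤ → ℝ) (hρ : Summable fun n : ℤ => ρ n ^ 2) (k : ℤ) :
    Summable fun n : ℤ => ρ (n + k) ^ 2 := by
  have := ((Equiv.addRight k).summable_iff (f := fun n : ℤ => ρ n ^ 2)).mpr hρ
  simpa [Function.comp_def, Equiv.coe_addRight] using this

lemma mul_shift_summable (ρ : ℤ → ℝ) (hρ : Summable fun n : ℤ => ρ n ^ 2) (a b : ℤ) :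
    Summable fun n : ℤ => ρ (n + a) * ρ (n + b) := by
  apply Summable.of_abs
  apply Summable.of_nonneg_of_le (fun n => abs_nonneg _) (fun n => ?_)
    (((sq_shift ρ hρ a).add (sq_shift ρ hρ b)).div_const 2)
  rw [abs_mul]
  nlinarith [sq_nonneg (|ρ (n+a)| - |ρ (n+b)|), sq_abs (ρ (n+a)), sq_abs (ρ (n+b))]

lemma tsum_shift (F : ℤ → ℝ) (k : ℤ) : ∑' n : ℤ, F (n + k) = ∑' n, F n := by
  have := (Equiv.addRight k).tsum_eq F
  simpa [Equiv.coe_addRight] using this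

lemma tsum_comb6 (f1 f2 f3 f4 f5 f6 : ℤ → ℝ) (a b c d e g : ℝ)
    (h1 : Summable f1) (h2 : Summable f2) (h3 : Summable f3)
    (h4 : Summable f4) (h5 : Summable f5) (h6 : Summable f6) :
    ∑' n, (a * f1 n + b * f2 n + c * f3 n + d * f4 n + e * f5 n + g * f6 n)
      = a * ∑' n, f1 n + b * ∑' n, f2 n + c * ∑' n, f3 n + d * ∑' n, f4 n
        + e * ∑' n, f5 n + g * ∑' n, f6 n := by
  rw [Summable.tsum_add (((((h1.mul_left a).add (h2.mul_left b)).add (h3.mul_left c)).add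
      (h4.mul_left d)).add (h5.mul_left e)) (h6.mul_left g),
    Summable.tsum_add ((((h1.mul_left a).add (h2.mul_left b)).add (h3.mul_left c)).add
      (h4.mul_left d)) (h5.mul_left e),
    Summable.tsum_add (((h1.mul_left a).add (h2.mul_left b)).add (h3.mul_left c)) (h4.mul_left d),
    Summable.tsum_add ((h1.mul_left a).add (h2.mul_left b)) (h3.mul_left c),
    Summable.tsum_add (h1.mul_left a) (h2.mul_left b),
    tsum_mul_left, tsum_mul_left, tsum_mul_left, tsum_mul_left, tsum_mul_left, tsum_mul_left]

/-- **Proposition 2.1 (1).**  If `ρ ∈ L²_h` and `D₊³ρ ∈ L²_h`, then `(D₊²D₋ρ, ρ)_{L²_h} ≥ 0`. -/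
theorem discrete_DppDm_inner_nonneg
    (h : ℝ) (hh : 0 < h) (ρ : ℤ → ℝ)
    (hρ : MemL2 ρ) (hρ3 : MemL2 ((Dp h)^[3] ρ)) :
    0 ≤ ip2 h (Dp h (Dp h (Dm h ρ))) ρ := by
  have hρ' : Summable fun n : ℤ => ρ n ^ 2 := hρ
  have sA : Summable fun n : ℤ => ρ n * ρ n := by
    simpa using mul_shift_summable ρ hρ' 0 0
  have sB : Summable fun n : ℤ => ρ (n+1) * ρ n := by
    simpa using mul_shift_summable ρ hρ' 1 0
  have sC : Summable fun n : ℤ => ρ (n+2) * ρ n := by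
    simpa using mul_shift_summable ρ hρ' 2 0
  have sBm : Summable fun n : ℤ => ρ (n-1) * ρ n := by
    simpa [sub_eq_add_neg] using mul_shift_summable ρ hρ' (-1) 0
  have sA2 : Summable fun n : ℤ => ρ (n+2) * ρ (n+2) := by
    simpa using mul_shift_summable ρ hρ' 2 2
  have sA1 : Summable fun n : ℤ => ρ (n+1) * ρ (n+1) := by
    simpa using mul_shift_summable ρ hρ' 1 1
  have sB21 : Summable fun n : ℤ => ρ (n+2) * ρ (n+1) := by
    simpa using mul_shift_summable ρ hρ' 2 1
  set A := ∑' n : ℤ, ρ n * ρ n with hA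
  set B := ∑' n : ℤ, ρ (n+1) * ρ n with hB
  set C := ∑' n : ℤ, ρ (n+2) * ρ n with hC
  -- shifted sums
  have hB' : ∑' n : ℤ, ρ (n-1) * ρ n = B := by
    have e := tsum_shift (fun n : ℤ => ρ (n-1) * ρ n) 1
    rw [← e]
    exact tsum_congr fun n => by rw [show n+1-1 = n by ring]; exact (mul_comm _ _)
  have hA2 : ∑' n : ℤ, ρ (n+2) * ρ (n+2) = A := tsum_shift (fun n : ℤ => ρ n * ρ n) 2
  have hA1 : ∑' n : ℤ, ρ (n+1) * ρ (n+1) = A := tsum_shift (fun n : ℤ => ρ n * ρ n) 1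
  have hB21 : ∑' n : ℤ, ρ (n+2) * ρ (n+1) = B := by
    have e := tsum_shift (fun n : ℤ => ρ (n+1) * ρ n) 1
    rw [hB, ← e]
    exact tsum_congr fun n => by rw [show n+1+1 = n+2 by ring]
  -- Step 1: ip2 = (3A - 4B + C)/h²
  have key : ip2 h (Dp h (Dp h (Dm h ρ))) ρ
      = (1/h^2) * C + (-3/h^2) * B + (3/h^2) * A + (-1/h^2) * (∑' n : ℤ, ρ (n-1) * ρ n)
        + 0 * (∑' n : ℤ, ρ (n+2) * ρ (n+1)) + 0 * (∑' n : ℤ, ρ (n+2) * ρ (n+2)) := by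
    rw [ip2, ← tsum_comb6 _ _ _ _ _ _ _ _ _ _ _ _ sC sB sA sBm sB21 sA2]
    apply tsum_congr
    intro n
    simp only [Dp, Dm]
    rw [show n+1+1 = n+2 by ring, show n+1-1 = n by ring, show n+2-1 = n+1 by ring]
    field_simp
    ring
  -- Step 2: 0 ≤ 6A - 8B + 2C
  have hGnn : (0:ℝ) ≤ ∑' n : ℤ, (ρ (n+2) - 2*ρ (n+1) + ρ n)^2 :=
    tsum_nonneg fun n => sq_nonneg _
  have hGval : ∑' n : ℤ, (ρ (n+2) - 2*ρ (n+1) + ρ n)^2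
      = 1 * (∑' n : ℤ, ρ (n+2) * ρ (n+2)) + 4 * (∑' n : ℤ, ρ (n+1) * ρ (n+1)) + 1 * A
        + (-4) * (∑' n : ℤ, ρ (n+2) * ρ (n+1)) + 2 * C + (-4) * B := by
    rw [← tsum_comb6 _ _ _ _ _ _ _ _ _ _ _ _ sA2 sA1 sA sB21 sC sB]
    exact tsum_congr fun n => by ring
  rw [hA2, hA1, hB21] at hGval
  have hcomb : 0 ≤ 3*A - 4*B + C := by linarith [hGnn.trans_eq hGval]
  rw [key, hB', hB21, hA2]
  have hh2 : (0:ℝ) < h^2 := by positivity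
  rw [div_mul_eq_mul_div, div_mul_eq_mul_div, div_mul_eq_mul_div, div_mul_eq_mul_div]
  have : (1*C)/h^2 + (-3*B)/h^2 + (3*A)/h^2 + (-1*B)/h^2 + 0*B + 0*A
      = (3*A - 4*B + C)/h^2 := by ring
  rw [this]
  exact div_nonneg hcomb hh2.le
end
end

section
/- For all nonnegative integers N, j and every integer k ≥ 1 there exists C > 0 such that for every h ∈ (0,1) and every mesh function u with ⟨x⟩^N u ∈ L²_h and ⟨x⟩^N D₊^{j+k} u ∈ L²_h, one has sup_{m∈ℤ} |⟨mh⟩^N·D₊ʲu(m)| ≤ C·(‖⟨x⟩^N u‖_{L²_h} + ‖⟨x⟩^N D₊^{j+k} u‖_{L²_h}). -/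
noncomputable section

open Set Filter

namespace DWS

lemma one_le_jp (h : ℝ) (n : ℤ) : 1 ≤ jp h n := by
  have := Real.sqrt_le_sqrt (show (1:ℝ) ≤ ((n:ℝ)*h)^2+1 by nlinarith [sq_nonneg ((n:ℝ)*h)])
  simpa [jp] using this

lemma jp_pos (h : ℝ) (n : ℤ) : 0 < jp h n := lt_of_lt_of_le one_pos (one_le_jp h n)

lemma jp_lipschitz (h : ℝ) (a b : ℤ) : |jp h a - jp h b| ≤ |(a:ℝ) - b| * |h| := by
  have key : ∀ x y : ℝ, |Real.sqrt (x^2+1) - Real.sqrt (y^2+1)| ≤ |x - y| := by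
    intro x y
    have hx : Real.sqrt (x^2+1) ^ 2 = x^2+1 := Real.sq_sqrt (by positivity)
    have hy : Real.sqrt (y^2+1) ^ 2 = y^2+1 := Real.sq_sqrt (by positivity)
    have hx1 : |x| ≤ Real.sqrt (x^2+1) := by
      rw [show |x| = Real.sqrt (x^2) by rw [Real.sqrt_sq_eq_abs]]
      exact Real.sqrt_le_sqrt (by linarith)
    have hy1 : |y| ≤ Real.sqrt (y^2+1) := by
      rw [show |y| = Real.sqrt (y^2) by rw [Real.sqrt_sq_eq_abs]]
      exact Real.sqrt_le_sqrt (by linarith)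
    have hpos : 0 < Real.sqrt (x^2+1) + Real.sqrt (y^2+1) := by positivity
    rw [abs_le]
    constructor <;> nlinarith [abs_nonneg (x-y), le_abs_self (x-y), neg_abs_le (x-y),
      le_abs_self x, neg_abs_le x, le_abs_self y, neg_abs_le y]
  have := key ((a:ℝ)*h) ((b:ℝ)*h)
  calc |jp h a - jp h b| ≤ |(a:ℝ)*h - (b:ℝ)*h| := this
    _ = |(a:ℝ)-b| * |h| := by rw [← sub_mul, abs_mul]

lemma jp_succ_le (h : ℝ) (hh : h ∈ Set.Ioo (0:ℝ) 1) (n : ℤ) : jp h (n+1) ≤ 2 * jp h n := by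
  have l := jp_lipschitz h (n+1) n
  have : |((n:ℝ)+1) - n| = 1 := by simp
  have h1 : |jp h (n+1) - jp h n| ≤ h := by
    rw [abs_of_pos hh.1] at l
    calc |jp h (n+1) - jp h n| ≤ |((n+1:ℤ):ℝ) - n| * h := l
      _ = h := by push_cast; simp
  have := one_le_jp h n
  have := abs_le.1 h1
  linarith [hh.2.le]

lemma jp_pred_le (h : ℝ) (hh : h ∈ Set.Ioo (0:ℝ) 1) (n : ℤ) : jp h (n-1) ≤ 2 * jp h n := by
  have l := jp_lipschitz h (n-1) n
  have h1 : |jp h (n-1) - jp h n| ≤ h := by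
    rw [abs_of_pos hh.1] at l
    calc |jp h (n-1) - jp h n| ≤ |((n-1:ℤ):ℝ) - n| * h := l
      _ = h := by push_cast; simp
  have := one_le_jp h n
  have := abs_le.1 h1
  linarith [hh.2.le]

lemma pow_sub_pow_bound (M : ℕ) (h a b : ℝ) (ha : 0 ≤ a) (hb : 1 ≤ b)
    (hab : |a - b| ≤ h) (hh1 : h ≤ 1) (hh0 : 0 ≤ h) :
    |a ^ M - b ^ M| ≤ M * 2 ^ M * b ^ M * h := by
  induction M with
  | zero => simp [hh0]
  | succ M ih =>
    have ha2b : a ≤ 2 * b := by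
      have := abs_le.1 hab
      linarith
    have hbM : (0:ℝ) < b ^ M := by positivity
    have hbM1 : b ^ M ≤ b ^ (M+1) := by
      calc b ^ M = 1 * b ^ M := by ring
        _ ≤ b * b ^ M := by nlinarith
        _ = b ^ (M+1) := by ring
    have key : a ^ (M+1) - b ^ (M+1) = a * (a ^ M - b ^ M) + (a - b) * b ^ M := by ring
    have habs : |a ^ (M+1) - b ^ (M+1)| ≤ a * |a ^ M - b ^ M| + |a - b| * b ^ M := by
      rw [key]
      calc |a * (a ^ M - b ^ M) + (a - b) * b ^ M| ≤ |a * (a ^ M - b ^ M)| + |(a - b) * b ^ M| := abs_add_le _ _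
        _ = a * |a ^ M - b ^ M| + |a - b| * b ^ M := by
            rw [abs_mul, abs_mul, abs_of_nonneg ha, abs_of_pos hbM]
    have h2 : a * |a ^ M - b ^ M| ≤ 2 * b * (M * 2 ^ M * b ^ M * h) := by
      apply mul_le_mul ha2b ih (abs_nonneg _) (by positivity)
    calc |a ^ (M+1) - b ^ (M+1)| ≤ 2 * b * (M * 2 ^ M * b ^ M * h) + h * b ^ M := by
          apply le_trans habs
          gcongr
      _ ≤ ((M:ℝ)+1) * 2 ^ (M+1) * b ^ (M+1) * h := by
          have e1 : 2 * b * ((M:ℝ) * 2 ^ M * b ^ M * h) = M * 2^(M+1) * b^(M+1) * h := by ring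
          rw [e1]
          have h2p : (1:ℝ) ≤ 2^(M+1) := one_le_pow₀ (by norm_num)
          have h3 : h * b ^ M ≤ 2^(M+1) * b^(M+1) * h := by
            have h4 : b ^ M ≤ 2^(M+1) * b^(M+1) := le_trans hbM1 (by nlinarith)
            calc h * b^M ≤ h * (2^(M+1)*b^(M+1)) := mul_le_mul_of_nonneg_left h4 hh0
              _ = 2^(M+1)*b^(M+1)*h := by ring
          linarith
      _ = (M+1 : ℕ) * 2 ^ (M+1) * b ^ (M+1) * h := by push_cast; ring


lemma memL2_shift {g : ℤ → ℝ} (hg : MemL2 g) : MemL2 (fun n => g (n+1)) := by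
  have : (fun n : ℤ => (g (n+1))^2) = (fun n : ℤ => (g n)^2) ∘ (Equiv.addRight (1:ℤ)) := rfl
  rw [MemL2, this, Equiv.summable_iff]
  exact hg

lemma memL2_shiftm {g : ℤ → ℝ} (hg : MemL2 g) : MemL2 (fun n => g (n-1)) := by
  have : (fun n : ℤ => (g (n-1))^2) = (fun n : ℤ => (g n)^2) ∘ (Equiv.subRight (1:ℤ)) := rfl
  rw [MemL2, this, Equiv.summable_iff]
  exact hg

lemma tsum_shift (g : ℤ → ℝ) : ∑' n : ℤ, g (n+1) = ∑' n, g n :=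
  (Equiv.addRight (1:ℤ)).tsum_eq g

lemma tsum_shiftm (g : ℤ → ℝ) : ∑' n : ℤ, g (n-1) = ∑' n, g n :=
  (Equiv.subRight (1:ℤ)).tsum_eq g

lemma summable_mul {f g : ℤ → ℝ} (hf : MemL2 f) (hg : MemL2 g) :
    Summable (fun n => f n * g n) := by
  apply Summable.of_abs
  apply Summable.of_nonneg_of_le (fun n => abs_nonneg _)
    (fun n => ?_) (((hf.add hg).div_const 2))
  rw [abs_mul]
  have := sq_nonneg (|f n| - |g n|)
  have e1 : |f n|^2 = f n ^2 := sq_abs _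
  have e2 : |g n|^2 = g n ^2 := sq_abs _
  nlinarith

lemma memL2_of_le {f g : ℤ → ℝ} (hg : MemL2 g) (hle : ∀ n, |f n| ≤ g n) : MemL2 f := by
  apply Summable.of_nonneg_of_le (fun n => sq_nonneg _) (fun n => ?_) hg
  have h1 := hle n
  have h0 := abs_nonneg (f n)
  nlinarith [sq_abs (f n)]

/-- Telescoping sum over `Finset.Ico` in `ℤ`. -/
lemma tele (F : ℤ → ℝ) (M : ℤ) : ∀ m, M ≤ m →
    ∑ n ∈ Finset.Ico M m, (F (n+1) - F n) = F m - F M := by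
  refine Int.le_induction ?_ ?_
  · simp
  · intro m hm ih
    have hins : Finset.Ico M (m+1) = insert m (Finset.Ico M m) := by
      ext x; simp only [Finset.mem_Ico, Finset.mem_insert]; omega
    rw [hins, Finset.sum_insert Finset.right_notMem_Ico, ih]
    ring

/-- Discrete Sobolev sup bound: `|v m|² ≤ ‖D₊v‖² + 2‖v‖²`. -/
lemma sup_bound (h : ℝ) (hh : h ∈ Set.Ioo (0:ℝ) 1) (v : ℤ → ℝ)
    (hv : MemL2 v) (hdv : MemL2 (Dp h v)) (m : ℤ) :
    (v m)^2 ≤ (nrm h (Dp h v))^2 + 2 * (nrm h v)^2 := by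
  have h0 := hh.1
  set B : ℤ → ℝ := fun n => (Dp h v n)^2 * h / 2 + (v (n+1))^2 * h + (v n)^2 * h with hB
  have hvs : MemL2 (fun n => v (n+1)) := memL2_shift hv
  have hBsum : Summable B := by
    apply Summable.add
    apply Summable.add
    · exact ((hdv.mul_right h).div_const 2)
    · exact (hvs.mul_right h)
    · exact (hv.mul_right h)
  have hBnn : ∀ n, 0 ≤ B n := fun n => by positivity
  -- pointwise bound on the telescoping increments
  have hptw : ∀ n : ℤ, |(v (n+1))^2 - (v n)^2| ≤ B n := by
    intro n
    have hDp : v (n+1) - v n = h * Dp h v n := by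
      show v (n+1) - v n = h * ((v (n+1) - v n)/h)
      field_simp
    have e : (v (n+1))^2 - (v n)^2 = (h * Dp h v n) * (v (n+1) + v n) := by
      rw [← hDp]; ring
    rw [e]
    have h1 : |Dp h v n * (v (n+1) + v n)| ≤ ((Dp h v n)^2 + (v (n+1) + v n)^2)/2 := by
      rw [abs_mul]
      nlinarith [sq_nonneg (|Dp h v n| - |v (n+1) + v n|), sq_abs (Dp h v n),
        sq_abs (v (n+1) + v n), abs_nonneg (Dp h v n), abs_nonneg (v (n+1) + v n)]
    have hab : |(h * Dp h v n) * (v (n+1) + v n)| ≤ h * (((Dp h v n)^2 + (v (n+1) + v n)^2)/2) := by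
      rw [mul_assoc, abs_mul, abs_of_pos h0]
      exact mul_le_mul_of_nonneg_left h1 h0.le
    show |(h * Dp h v n) * (v (n+1) + v n)| ≤ (Dp h v n)^2 * h / 2 + (v (n+1))^2 * h + (v n)^2 * h
    nlinarith [sq_nonneg (v (n+1) - v n)]
  -- tail : v M → 0 at -infty
  have htail : Tendsto (fun M : ℤ => (v M)^2) atBot (nhds 0) := by
    have := hv.tendsto_cofinite_zero
    rw [Int.cofinite_eq] at this
    exact this.mono_left le_sup_left
  -- for every M ≤ m : v m ^2 ≤ v M ^2 + tsum B
  have hkey : ∀ M : ℤ, M ≤ m → (v m)^2 ≤ (v M)^2 + ∑' n, B n := by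
    intro M hM
    have htel := tele (fun n => (v n)^2) M m hM
    have htel' : ∑ n ∈ Finset.Ico M m, ((v (n+1))^2 - (v n)^2) = (v m)^2 - (v M)^2 := htel
    have hfin : ∑ n ∈ Finset.Ico M m, ((v (n+1))^2 - (v n)^2) ≤ ∑' n, B n := by
      calc ∑ n ∈ Finset.Ico M m, ((v (n+1))^2 - (v n)^2)
          ≤ ∑ n ∈ Finset.Ico M m, B n := by
            apply Finset.sum_le_sum
            intro i _
            exact le_trans (le_abs_self _) (hptw i)
        _ ≤ ∑' n, B n := Summable.sum_le_tsum _ (fun i _ => hBnn i) hBsum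
    linarith [htel', hfin]
  have hlim : Tendsto (fun M : ℤ => (v M)^2 + ∑' n, B n) atBot (nhds (0 + ∑' n, B n)) :=
    htail.add tendsto_const_nhds
  have : (v m)^2 ≤ 0 + ∑' n, B n := by
    apply ge_of_tendsto hlim
    filter_upwards [eventually_le_atBot m] with M hM
    exact hkey M hM
  -- now bound tsum B by the norms
  have hnrm1 : (nrm h (Dp h v))^2 = ∑' n, (Dp h v n)^2 * h := by
    rw [nrm, Real.sq_sqrt]
    exact tsum_nonneg (fun n => by positivity)
  have hnrm2 : (nrm h v)^2 = ∑' n, (v n)^2 * h := by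
    rw [nrm, Real.sq_sqrt]
    exact tsum_nonneg (fun n => by positivity)
  have hsplit : ∑' n, B n = (∑' n, (Dp h v n)^2 * h)/2 + (∑' n, (v (n+1))^2 * h) + (∑' n, (v n)^2 * h) := by
    rw [hB, Summable.tsum_add (((hdv.mul_right h).div_const 2).add (hvs.mul_right h)) (hv.mul_right h),
        Summable.tsum_add ((hdv.mul_right h).div_const 2) (hvs.mul_right h), tsum_div_const]
  have hshifteq : ∑' n : ℤ, (v (n+1))^2 * h = ∑' n, (v n)^2 * h := tsum_shift (fun n => (v n)^2 * h)
  have hDnn : 0 ≤ ∑' n, (Dp h v n)^2 * h := tsum_nonneg (fun n => by positivity)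
  rw [hnrm1, hnrm2]
  rw [hsplit, hshifteq] at this
  linarith


lemma memL2_const_mul {f : ℤ → ℝ} (c : ℝ) (hf : MemL2 f) : MemL2 (fun n => c * f n) := by
  have : (fun n : ℤ => (c * f n)^2) = fun n => c^2 * (f n)^2 := by funext n; ring
  rw [MemL2, this]
  exact hf.mul_left _

lemma memL2_abs {f : ℤ → ℝ} (hf : MemL2 f) : MemL2 (fun n => |f n|) := by
  have : (fun n : ℤ => (|f n|)^2) = fun n => (f n)^2 := by funext n; rw [sq_abs]
  rw [MemL2, this]; exact hf

lemma two_sq (a b p q : ℝ) : (a*p + b*q)^2 ≤ 2*(a*p)^2 + 2*(b*q)^2 := by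
  nlinarith [sq_nonneg (a*p - b*q)]

lemma amgm (x y ε : ℝ) (hε : 0 < ε) : x * y ≤ x^2/(2*ε) + ε*y^2/2 := by
  rw [div_add_div _ _ (by positivity) two_ne_zero, le_div_iff₀ (by positivity)]
  nlinarith [sq_nonneg (x - ε*y)]

/-- Summation by parts on `ℤ`. -/
lemma sbp (p q : ℤ → ℝ) (h1 : Summable (fun n => p n * q n))
    (h2 : Summable (fun n => p (n+1) * q n)) :
    ∑' n : ℤ, (p (n+1) - p n) * q n = -∑' n : ℤ, p n * (q n - q (n-1)) := by
  have hcomp : ((fun n : ℤ => p n * q (n-1)) ∘ (Equiv.addRight (1:ℤ))) = fun n => p (n+1) * q n := by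
    funext n; simp
  have h3 : Summable (fun n : ℤ => p n * q (n-1)) := by
    rw [← (Equiv.addRight (1:ℤ)).summable_iff, hcomp]; exact h2
  have e2 : ∑' n : ℤ, p (n+1) * q n = ∑' n : ℤ, p n * q (n-1) := by
    rw [← (Equiv.addRight (1:ℤ)).tsum_eq (fun n : ℤ => p n * q (n-1))]
    congr 1
    funext n; simp
  have e1 : ∑' n : ℤ, (p (n+1) - p n) * q n
      = (∑' n : ℤ, p (n+1) * q n) - ∑' n : ℤ, p n * q n := by
    rw [← Summable.tsum_sub h2 h1]; congr 1; funext n; ring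
  have e3 : ∑' n : ℤ, p n * (q n - q (n-1))
      = (∑' n : ℤ, p n * q n) - ∑' n : ℤ, p n * q (n-1) := by
    rw [← Summable.tsum_sub h1 h3]; congr 1; funext n; ring
  rw [e1, e2, e3]; ring

set_option maxHeartbeats 1000000 in
/-- Abstract-weight Landau-type estimate via summation by parts. -/
lemma core (h PW K ε₁ : ℝ) (h0 : 0 < h) (hPW : 1 ≤ PW) (hKpos : 0 < K) (hε₁ : 0 < ε₁)
    (w v dv ddv : ℤ → ℝ) (hwpos : ∀ n, 0 < w n)
    (hwup : ∀ n, w n ≤ PW * w (n-1)) (hwdn : ∀ n, w (n-1) ≤ PW * w n)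
    (hw2 : ∀ n, |(w n)^2 - (w (n-1))^2| ≤ K * (w n * w (n-1)) * h)
    (hdveq : ∀ n, v (n+1) - v n = h * dv n)
    (hddveq : ∀ n, dv (n+1) - dv n = h * ddv n)
    (hv : Summable (fun n => (w n * v n)^2))
    (hdv : Summable (fun n => (w n * dv n)^2))
    (hddv : Summable (fun n => (w n * ddv n)^2)) :
    ∑' n : ℤ, (w n * dv n)^2 * h
      ≤ PW * ε₁ * ∑' n : ℤ, (w n * ddv n)^2 * h
        + (PW/ε₁ + K^2) * ∑' n : ℤ, (w n * v n)^2 * h := by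
  have hPW0 : (0:ℝ) < PW := lt_of_lt_of_le one_pos hPW
  set A : ℤ → ℝ := fun n => (w n)^2 * dv n with hA
  set G : ℤ → ℝ := fun n => (PW/(2*ε₁) + K^2/2) * ((w n * v n)^2*h)
      + (PW*ε₁/2) * ((w (n-1) * ddv (n-1))^2*h) + (1/2) * ((w (n-1) * dv (n-1))^2*h) with hG
  -- shifted summability
  have hddv' : Summable (fun n : ℤ => (w (n-1) * ddv (n-1))^2) := by
    have e : ((fun n : ℤ => (w n * ddv n)^2) ∘ (Equiv.subRight (1:ℤ))) = fun n : ℤ => (w (n-1) * ddv (n-1))^2 := rfl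
    rw [← e, Equiv.summable_iff]; exact hddv
  have hdv' : Summable (fun n : ℤ => (w (n-1) * dv (n-1))^2) := by
    have e : ((fun n : ℤ => (w n * dv n)^2) ∘ (Equiv.subRight (1:ℤ))) = fun n : ℤ => (w (n-1) * dv (n-1))^2 := rfl
    rw [← e, Equiv.summable_iff]; exact hdv
  have hGsum : Summable G := by
    apply Summable.add
    apply Summable.add
    · exact (hv.mul_right h).mul_left _
    · exact (hddv'.mul_right h).mul_left _
    · exact (hdv'.mul_right h).mul_left _
  -- pointwise bound
  have hptw : ∀ n : ℤ, |v n * (A n - A (n-1))| ≤ G n := by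
    intro n
    have hDVdiff : dv n - dv (n-1) = h * ddv (n-1) := by
      have e := hddveq (n-1)
      have e' : (n-1)+1 = n := by ring
      rw [e'] at e; exact e
    have hAsplit : A n - A (n-1) = (w n)^2 * (h * ddv (n-1)) + ((w n)^2 - (w (n-1))^2) * dv (n-1) := by
      rw [hA]; simp only []
      rw [← hDVdiff]; ring
    set X : ℝ := w n * |v n| with hX
    set Y : ℝ := w (n-1) * |ddv (n-1)| with hY
    set Z : ℝ := w (n-1) * |dv (n-1)| with hZ
    have hXnn : 0 ≤ X := by rw [hX]; exact mul_nonneg (hwpos n).le (abs_nonneg _)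
    have hYnn : 0 ≤ Y := by rw [hY]; exact mul_nonneg (hwpos (n-1)).le (abs_nonneg _)
    have hZnn : 0 ≤ Z := by rw [hZ]; exact mul_nonneg (hwpos (n-1)).le (abs_nonneg _)
    have t1 : |v n * ((w n)^2 * (h * ddv (n-1)))| ≤ h * PW * (X * Y) := by
      have e : |v n * ((w n)^2 * (h * ddv (n-1)))| = h * ((w n * |v n|) * (w n * |ddv (n-1)|)) := by
        rw [abs_mul, abs_mul, abs_mul, abs_of_pos h0, abs_of_pos (pow_pos (hwpos n) 2)]
        ring
      rw [e, hX, hY]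
      have hy : w n * |ddv (n-1)| ≤ PW * (w (n-1) * |ddv (n-1)|) := by
        have := mul_le_mul_of_nonneg_right (hwup n) (abs_nonneg (ddv (n-1)))
        calc w n * |ddv (n-1)| ≤ PW * w (n-1) * |ddv (n-1)| := this
          _ = PW * (w (n-1) * |ddv (n-1)|) := by ring
      calc h * ((w n * |v n|) * (w n * |ddv (n-1)|))
          ≤ h * ((w n * |v n|) * (PW * (w (n-1) * |ddv (n-1)|))) := by
            apply mul_le_mul_of_nonneg_left _ h0.le
            apply mul_le_mul_of_nonneg_left hy (mul_nonneg (hwpos n).le (abs_nonneg _))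
        _ = h * PW * ((w n * |v n|) * (w (n-1) * |ddv (n-1)|)) := by ring
    have t2 : |v n * (((w n)^2 - (w (n-1))^2) * dv (n-1))| ≤ h * K * (X * Z) := by
      have e : |v n * (((w n)^2 - (w (n-1))^2) * dv (n-1))|
          = |v n| * |(w n)^2 - (w (n-1))^2| * |dv (n-1)| := by
        rw [abs_mul, abs_mul]; ring
      rw [e]
      calc |v n| * |(w n)^2 - (w (n-1))^2| * |dv (n-1)|
          ≤ |v n| * (K * (w n * w (n-1)) * h) * |dv (n-1)| := by
            apply mul_le_mul_of_nonneg_right _ (abs_nonneg _)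
            apply mul_le_mul_of_nonneg_left (hw2 n) (abs_nonneg _)
        _ = h * K * (X * Z) := by rw [hX, hZ]; ring
    have hsum : |v n * (A n - A (n-1))| ≤ h * PW * (X * Y) + h * K * (X * Z) := by
      calc |v n * (A n - A (n-1))|
          = |v n * ((w n)^2 * (h * ddv (n-1))) + v n * (((w n)^2 - (w (n-1))^2) * dv (n-1))| := by
            rw [hAsplit, mul_add]
        _ ≤ |v n * ((w n)^2 * (h * ddv (n-1)))| + |v n * (((w n)^2 - (w (n-1))^2) * dv (n-1))| := abs_add_le _ _
        _ ≤ h * PW * (X * Y) + h * K * (X * Z) := add_le_add t1 t2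
    have am1 : X * Y ≤ X^2/(2*ε₁) + ε₁*Y^2/2 := amgm X Y ε₁ hε₁
    have am2 : X * Z ≤ K*X^2/2 + Z^2/(2*K) := by
      have h' := amgm X Z (1/K) (by positivity)
      calc X * Z ≤ X^2/(2*(1/K)) + (1/K)*Z^2/2 := h'
        _ = K*X^2/2 + Z^2/(2*K) := by field_simp
    have hX2 : X^2 = (w n * v n)^2 := by rw [hX, mul_pow, mul_pow, sq_abs]
    have hY2 : Y^2 = (w (n-1) * ddv (n-1))^2 := by rw [hY, mul_pow, mul_pow, sq_abs]
    have hZ2 : Z^2 = (w (n-1) * dv (n-1))^2 := by rw [hZ, mul_pow, mul_pow, sq_abs]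
    have hGn : G n = (PW/(2*ε₁) + K^2/2) * (X^2*h) + (PW*ε₁/2) * (Y^2*h) + (1/2) * (Z^2*h) := by
      rw [hG]; simp only []
      rw [hX2, hY2, hZ2]
    rw [hGn]
    have f1 : h * PW * (X * Y) ≤ h * PW * (X^2/(2*ε₁) + ε₁*Y^2/2) :=
      mul_le_mul_of_nonneg_left am1 (mul_nonneg h0.le hPW0.le)
    have f2 : h * K * (X * Z) ≤ h * K * (K*X^2/2 + Z^2/(2*K)) :=
      mul_le_mul_of_nonneg_left am2 (mul_nonneg h0.le hKpos.le)
    have e2 : h * K * (K*X^2/2 + Z^2/(2*K)) = K^2/2 * (X^2*h) + 1/2 * (Z^2*h) := by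
      field_simp
    have e1 : h * PW * (X^2/(2*ε₁) + ε₁*Y^2/2) = PW/(2*ε₁) * (X^2*h) + PW*ε₁/2 * (Y^2*h) := by
      field_simp
    calc |v n * (A n - A (n-1))| ≤ h * PW * (X * Y) + h * K * (X * Z) := hsum
      _ ≤ h * PW * (X^2/(2*ε₁) + ε₁*Y^2/2) + h * K * (K*X^2/2 + Z^2/(2*K)) := add_le_add f1 f2
      _ = (PW/(2*ε₁) + K^2/2) * (X^2*h) + (PW*ε₁/2) * (Y^2*h) + (1/2) * (Z^2*h) := by
          rw [e1, e2]; ring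
  -- summation by parts identity
  have hsum1 : Summable (fun n : ℤ => v n * A n) := by
    have e : (fun n : ℤ => v n * A n) = fun n => (w n * v n) * (w n * dv n) := by
      funext n; rw [hA]; ring
    rw [e]; exact summable_mul hv hdv
  have hsum2 : Summable (fun n : ℤ => v (n+1) * A n) := by
    have e : (fun n : ℤ => v (n+1) * A n) = fun n => (w n * v (n+1)) * (w n * dv n) := by
      funext n; rw [hA]; ring
    rw [e]
    apply summable_mul _ hdv
    have hshift : Summable (fun n : ℤ => (w (n+1) * v (n+1))^2) := by
      have e : ((fun n : ℤ => (w n * v n)^2) ∘ (Equiv.addRight (1:ℤ))) = fun n : ℤ => (w (n+1) * v (n+1))^2 := rfl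
      rw [← e, Equiv.summable_iff]; exact hv
    have hg : MemL2 (fun n : ℤ => PW * |w (n+1) * v (n+1)|) := by
      have e : (fun n : ℤ => (PW * |w (n+1) * v (n+1)|)^2) = fun n : ℤ => PW^2 * (w (n+1) * v (n+1))^2 := by
        funext n; rw [mul_pow, sq_abs]
      rw [MemL2, e]
      exact hshift.mul_left _
    apply memL2_of_le hg
    intro n
    have h1 : |w n * v (n+1)| = w n * |v (n+1)| := by
      rw [abs_mul, abs_of_pos (hwpos n)]
    have h2 : w n ≤ PW * w (n+1) := by
      have := hwdn (n+1)
      simpa using this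
    calc |w n * v (n+1)| = w n * |v (n+1)| := h1
      _ ≤ (PW * w (n+1)) * |v (n+1)| := mul_le_mul_of_nonneg_right h2 (abs_nonneg _)
      _ = PW * (w (n+1) * |v (n+1)|) := by ring
      _ = PW * |w (n+1) * v (n+1)| := by rw [abs_mul, abs_of_pos (hwpos (n+1))]
  have hid : ∑' n : ℤ, (w n * dv n)^2 * h = -∑' n : ℤ, v n * (A n - A (n-1)) := by
    have e : (fun n : ℤ => (w n * dv n)^2 * h) = fun n : ℤ => (v (n+1) - v n) * A n := by
      funext n
      rw [hA, hdveq n]; ring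
    rw [e]
    exact sbp v A hsum1 hsum2
  -- put it together
  have habs : Summable (fun n : ℤ => |v n * (A n - A (n-1))|) :=
    Summable.of_nonneg_of_le (fun n => abs_nonneg _) hptw hGsum
  have hneg : -∑' n : ℤ, v n * (A n - A (n-1)) ≤ ∑' n, G n := by
    rw [← tsum_neg]
    apply Summable.tsum_le_tsum _ habs.of_abs.neg hGsum
    intro n
    calc -(v n * (A n - A (n-1))) ≤ |v n * (A n - A (n-1))| := neg_le_abs _
      _ ≤ G n := hptw n
  have hGval : ∑' n, G n = (PW/(2*ε₁) + K^2/2) * (∑' n : ℤ, (w n * v n)^2*h)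
      + (PW*ε₁/2) * (∑' n : ℤ, (w n * ddv n)^2*h) + (1/2) * (∑' n : ℤ, (w n * dv n)^2*h) := by
    have s1 : Summable (fun n : ℤ => (PW/(2*ε₁) + K^2/2) * ((w n * v n)^2*h)) := (hv.mul_right h).mul_left _
    have s2 : Summable (fun n : ℤ => (PW*ε₁/2) * ((w (n-1) * ddv (n-1))^2*h)) := (hddv'.mul_right h).mul_left _
    have s3 : Summable (fun n : ℤ => (1/2 : ℝ) * ((w (n-1) * dv (n-1))^2*h)) := (hdv'.mul_right h).mul_left _
    rw [hG]
    rw [Summable.tsum_add (s1.add s2) s3, Summable.tsum_add s1 s2, tsum_mul_left, tsum_mul_left, tsum_mul_left]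
    rw [tsum_shiftm (fun n => (w n * ddv n)^2*h), tsum_shiftm (fun n => (w n * dv n)^2*h)]
  have main : ∑' n : ℤ, (w n * dv n)^2 * h ≤ (PW/(2*ε₁) + K^2/2) * (∑' n : ℤ, (w n * v n)^2*h)
      + (PW*ε₁/2) * (∑' n : ℤ, (w n * ddv n)^2*h) + (1/2) * (∑' n : ℤ, (w n * dv n)^2*h) := by
    calc ∑' n : ℤ, (w n * dv n)^2 * h = -∑' n : ℤ, v n * (A n - A (n-1)) := hid
      _ ≤ ∑' n, G n := hneg
      _ = _ := hGval
  have hnn1 : 0 ≤ ∑' n : ℤ, (w n * v n)^2*h :=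
    tsum_nonneg (fun n => mul_nonneg (sq_nonneg _) h0.le)
  have e : PW/(2*ε₁) = (PW/ε₁)/2 := by rw [div_div, mul_comm]
  rw [e] at main
  linarith


lemma memL2_add {f g : ℤ → ℝ} (hf : MemL2 f) (hg : MemL2 g) : MemL2 (fun n => f n + g n) := by
  apply Summable.of_nonneg_of_le (fun n => sq_nonneg _) (fun n => ?_)
    ((hf.mul_left 2).add (hg.mul_left 2))
  nlinarith [sq_nonneg (f n - g n)]

lemma wpow_dn (N : ℕ) (h : ℝ) (hmem : h ∈ Set.Ioo (0:ℝ) 1) (n : ℤ) :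
    jp h (n-1) ^ N ≤ 2^N * jp h n ^ N := by
  calc jp h (n-1)^N ≤ (2*jp h n)^N :=
        pow_le_pow_left₀ (jp_pos _ _).le (jp_pred_le h hmem n) N
    _ = 2^N * jp h n ^N := mul_pow _ _ _

lemma wpow_up (N : ℕ) (h : ℝ) (hmem : h ∈ Set.Ioo (0:ℝ) 1) (n : ℤ) :
    jp h n ^ N ≤ 2^N * jp h (n-1) ^ N := by
  have hb : jp h n ≤ 2 * jp h (n-1) := by
    have := jp_succ_le h hmem (n-1); simpa using this
  calc jp h n^N ≤ (2*jp h (n-1))^N := pow_le_pow_left₀ (jp_pos _ _).le hb N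
    _ = 2^N * jp h (n-1) ^N := mul_pow _ _ _

lemma wpow_succ (N : ℕ) (h : ℝ) (hmem : h ∈ Set.Ioo (0:ℝ) 1) (n : ℤ) :
    jp h (n+1) ^ N ≤ 2^N * jp h n ^ N := by
  calc jp h (n+1)^N ≤ (2*jp h n)^N :=
        pow_le_pow_left₀ (jp_pos _ _).le (jp_succ_le h hmem n) N
    _ = 2^N * jp h n ^N := mul_pow _ _ _

lemma jp_lip_succ (h : ℝ) (hmem : h ∈ Set.Ioo (0:ℝ) 1) (n : ℤ) :
    |jp h (n+1) - jp h n| ≤ h := by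
  have l := jp_lipschitz h (n+1) n
  rw [abs_of_pos hmem.1] at l
  calc |jp h (n+1) - jp h n| ≤ |((n+1:ℤ):ℝ) - n| * h := l
    _ = h := by push_cast; simp

lemma jp_lip_pred (h : ℝ) (hmem : h ∈ Set.Ioo (0:ℝ) 1) (n : ℤ) :
    |jp h n - jp h (n-1)| ≤ h := by
  have l := jp_lipschitz h n (n-1)
  rw [abs_of_pos hmem.1] at l
  calc |jp h n - jp h (n-1)| ≤ |(n:ℝ) - ((n-1:ℤ):ℝ)| * h := l
    _ = h := by push_cast; simp

lemma wpow_diff_succ (N : ℕ) (h : ℝ) (hmem : h ∈ Set.Ioo (0:ℝ) 1) (n : ℤ) :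
    |jp h (n+1) ^ N - jp h n ^ N| ≤ (N:ℝ) * 2^N * jp h n ^ N * h :=
  pow_sub_pow_bound N h (jp h (n+1)) (jp h n) (jp_pos _ _).le (one_le_jp h n)
    (jp_lip_succ h hmem n) hmem.2.le hmem.1.le

lemma wpow_sq_diff (N : ℕ) (h : ℝ) (hmem : h ∈ Set.Ioo (0:ℝ) 1) (n : ℤ) :
    |(jp h n ^ N)^2 - (jp h (n-1) ^ N)^2|
      ≤ (2*(N:ℝ)*2^(3*N)+1) * (jp h n ^ N * jp h (n-1) ^ N) * h := by
  obtain ⟨h0, h1⟩ := hmem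
  have hbig := pow_sub_pow_bound (2*N) h (jp h n) (jp h (n-1)) (jp_pos h n).le
    (one_le_jp h (n-1)) (jp_lip_pred h ⟨h0,h1⟩ n) h1.le h0.le
  have e1 : (jp h n ^ N)^2 = jp h n ^ (2*N) := by rw [← pow_mul, Nat.mul_comm]
  have e2 : (jp h (n-1) ^ N)^2 = jp h (n-1) ^ (2*N) := by rw [← pow_mul, Nat.mul_comm]
  rw [e1, e2]
  refine le_trans hbig ?_
  have e3 : jp h (n-1) ^ (2*N) = jp h (n-1)^N * jp h (n-1)^N := by
    rw [← pow_add]; congr 1; ring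
  have hwn : (0:ℝ) < jp h n ^ N := pow_pos (jp_pos _ _) N
  have hwn1 : (0:ℝ) < jp h (n-1) ^ N := pow_pos (jp_pos _ _) N
  have h4 : jp h (n-1)^N * jp h (n-1)^N ≤ (2^N * jp h n ^ N) * jp h (n-1)^N :=
    mul_le_mul_of_nonneg_right (wpow_dn N h ⟨h0,h1⟩ n) hwn1.le
  have h5 : ((2*N:ℕ):ℝ) * 2^(2*N) * 2^N ≤ 2*(N:ℝ)*2^(3*N)+1 := by
    push_cast
    have e : (2:ℝ)^(2*N) * 2^N = 2^(3*N) := by rw [← pow_add]; congr 1; ring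
    nlinarith [e, pow_pos (show (0:ℝ) < 2 by norm_num) (3*N)]
  calc ((2*N:ℕ):ℝ) * 2^(2*N) * jp h (n-1) ^ (2*N) * h
      ≤ ((2*N:ℕ):ℝ) * 2^(2*N) * ((2^N * jp h n ^ N) * jp h (n-1)^N) * h := by
        apply mul_le_mul_of_nonneg_right _ h0.le
        apply mul_le_mul_of_nonneg_left _ (by positivity)
        rw [e3]; exact h4
    _ = (((2*N:ℕ):ℝ) * 2^(2*N) * 2^N) * (jp h n ^ N * jp h (n-1)^N) * h := by ring
    _ ≤ (2*(N:ℝ)*2^(3*N)+1) * (jp h n ^ N * jp h (n-1)^N) * h := by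
        apply mul_le_mul_of_nonneg_right _ h0.le
        apply mul_le_mul_of_nonneg_right h5 (by positivity)

/-- All weighted discrete derivatives remain in `L²ₕ` (with `h`-dependent bounds). -/
lemma memF (N : ℕ) (h : ℝ) (hmem : h ∈ Set.Ioo (0:ℝ) 1) (u : ℤ → ℝ)
    (h0 : MemL2 (fun n => jp h n ^ N * u n)) :
    ∀ i, MemL2 (fun n => jp h n ^ N * (Dp h)^[i] u n) := by
  intro i
  induction i with
  | zero => simpa using h0
  | succ i ih =>
    have hpos := hmem.1
    have key : ∀ n : ℤ, |jp h n ^ N * (Dp h)^[i+1] u n|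
        ≤ (1/h) * (2^N * |jp h (n+1) ^ N * (Dp h)^[i] u (n+1)| + |jp h n ^ N * (Dp h)^[i] u n|) := by
      intro n
      have e : (Dp h)^[i+1] u n = ((Dp h)^[i] u (n+1) - (Dp h)^[i] u n)/h := by
        rw [Function.iterate_succ_apply']
        rfl
      rw [e]
      have hwn : (0:ℝ) < jp h n ^ N := pow_pos (jp_pos _ _) N
      have hwn1 : (0:ℝ) < jp h (n+1) ^ N := pow_pos (jp_pos _ _) N
      have e2 : |jp h n ^ N * (((Dp h)^[i] u (n+1) - (Dp h)^[i] u n)/h)|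
          = (1/h) * |jp h n ^ N * ((Dp h)^[i] u (n+1) - (Dp h)^[i] u n)| := by
        have ed := abs_div (jp h n ^ N * ((Dp h)^[i] u (n+1) - (Dp h)^[i] u n)) h
        rw [abs_of_pos hpos] at ed
        calc |jp h n ^ N * (((Dp h)^[i] u (n+1) - (Dp h)^[i] u n)/h)|
            = |(jp h n ^ N * ((Dp h)^[i] u (n+1) - (Dp h)^[i] u n))/h| := by rw [mul_div_assoc]
          _ = |jp h n ^ N * ((Dp h)^[i] u (n+1) - (Dp h)^[i] u n)|/h := ed
          _ = (1/h) * |jp h n ^ N * ((Dp h)^[i] u (n+1) - (Dp h)^[i] u n)| := by ring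
      rw [e2]
      apply mul_le_mul_of_nonneg_left _ (by positivity)
      calc |jp h n ^ N * ((Dp h)^[i] u (n+1) - (Dp h)^[i] u n)|
          = |jp h n ^ N * (Dp h)^[i] u (n+1) - jp h n ^ N * (Dp h)^[i] u n| := by rw [mul_sub]
        _ ≤ |jp h n ^ N * (Dp h)^[i] u (n+1)| + |jp h n ^ N * (Dp h)^[i] u n| := abs_sub _ _
        _ ≤ 2^N * |jp h (n+1) ^ N * (Dp h)^[i] u (n+1)| + |jp h n ^ N * (Dp h)^[i] u n| := by
            apply add_le_add_left
            have hd : jp h n ^ N ≤ 2^N * jp h (n+1)^N := by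
              have := wpow_dn N h hmem (n+1); simpa using this
            rw [abs_mul, abs_mul, abs_of_pos hwn, abs_of_pos hwn1, ← mul_assoc]
            exact mul_le_mul_of_nonneg_right hd (abs_nonneg _)
    have m0 : MemL2 (fun n : ℤ => jp h (n+1) ^ N * (Dp h)^[i] u (n+1)) :=
      memL2_shift (g := fun m => jp h m ^ N * (Dp h)^[i] u m) ih
    have m1 : MemL2 (fun n : ℤ => |jp h (n+1) ^ N * (Dp h)^[i] u (n+1)|) := memL2_abs m0
    have m2 : MemL2 (fun n : ℤ => (2:ℝ)^N * |jp h (n+1) ^ N * (Dp h)^[i] u (n+1)|) :=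
      memL2_const_mul _ m1
    have m3 : MemL2 (fun n : ℤ => |jp h n ^ N * (Dp h)^[i] u n|) := memL2_abs ih
    have m4 : MemL2 (fun n : ℤ => (2:ℝ)^N * |jp h (n+1) ^ N * (Dp h)^[i] u (n+1)|
        + |jp h n ^ N * (Dp h)^[i] u n|) := memL2_add m2 m3
    have m5 : MemL2 (fun n : ℤ => (1/h) * ((2:ℝ)^N * |jp h (n+1) ^ N * (Dp h)^[i] u (n+1)|
        + |jp h n ^ N * (Dp h)^[i] u n|)) := memL2_const_mul _ m4
    exact memL2_of_le m5 key


/-- The weighted square-sum. -/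
def Sq (h : ℝ) (N : ℕ) (f : ℤ → ℝ) : ℝ := ∑' n : ℤ, (jp h n ^ N * f n)^2 * h

lemma Sq_nonneg (h : ℝ) (N : ℕ) (f : ℤ → ℝ) (hh : 0 ≤ h) : 0 ≤ Sq h N f :=
  tsum_nonneg (fun n => mul_nonneg (sq_nonneg _) hh)

lemma nrm_eq_sqrt_Sq (h : ℝ) (N : ℕ) (f : ℤ → ℝ) :
    nrm h (fun n => jp h n ^ N * f n) = Real.sqrt (Sq h N f) := rfl

lemma dpeq (h : ℝ) (h0 : 0 < h) (f : ℤ → ℝ) (n : ℤ) : f (n+1) - f n = h * Dp h f n := by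
  show f (n+1) - f n = h * ((f (n+1) - f n)/h)
  field_simp

/-- One-step weighted Landau inequality for the mesh weight `⟨x⟩^N`. -/
lemma step (N : ℕ) (δ : ℝ) (hδ : 0 < δ) : ∃ C > (0:ℝ), ∀ h ∈ Set.Ioo (0:ℝ) 1, ∀ u : ℤ → ℝ,
    MemL2 (fun n => jp h n ^ N * u n) → ∀ i : ℕ,
    Sq h N ((Dp h)^[i+1] u) ≤ δ * Sq h N ((Dp h)^[i+2] u) + C * Sq h N ((Dp h)^[i] u) := by
  have hKpos : (0:ℝ) < 2*(N:ℝ)*2^(3*N) + 1 := by positivity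
  have hεpos : (0:ℝ) < δ / 2^N := by positivity
  refine ⟨2^N/(δ/2^N) + (2*(N:ℝ)*2^(3*N) + 1)^2, by positivity, ?_⟩
  intro h hmem u hu i
  have h0 := hmem.1
  have hdveq : ∀ n : ℤ, (Dp h)^[i] u (n+1) - (Dp h)^[i] u n = h * (Dp h)^[i+1] u n := by
    intro n
    have e := dpeq h h0 ((Dp h)^[i] u) n
    have e2 : Dp h ((Dp h)^[i] u) = (Dp h)^[i+1] u := (Function.iterate_succ_apply' (Dp h) i u).symm
    rw [e2] at e; exact e
  have hddveq : ∀ n : ℤ, (Dp h)^[i+1] u (n+1) - (Dp h)^[i+1] u n = h * (Dp h)^[i+2] u n := by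
    intro n
    have e := dpeq h h0 ((Dp h)^[i+1] u) n
    have e2 : Dp h ((Dp h)^[i+1] u) = (Dp h)^[i+2] u := (Function.iterate_succ_apply' (Dp h) (i+1) u).symm
    rw [e2] at e; exact e
  have hcore := core h (2^N) (2*(N:ℝ)*2^(3*N) + 1) (δ/2^N) h0
    (one_le_pow₀ (by norm_num)) hKpos hεpos
    (fun n => jp h n ^ N) ((Dp h)^[i] u) ((Dp h)^[i+1] u) ((Dp h)^[i+2] u)
    (fun n => pow_pos (jp_pos h n) N) (wpow_up N h hmem) (wpow_dn N h hmem)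
    (wpow_sq_diff N h hmem) hdveq hddveq
    (memF N h hmem u hu i) (memF N h hmem u hu (i+1)) (memF N h hmem u hu (i+2))
  have hcore' : Sq h N ((Dp h)^[i+1] u) ≤ 2^N * (δ/2^N) * Sq h N ((Dp h)^[i+2] u)
      + (2^N/(δ/2^N) + (2*(N:ℝ)*2^(3*N) + 1)^2) * Sq h N ((Dp h)^[i] u) := hcore
  have e : (2:ℝ)^N * (δ/2^N) = δ := by field_simp
  rw [e] at hcore'
  exact hcore'

/-- Interpolation against the zeroth derivative. -/
lemma lemP (N : ℕ) : ∀ i : ℕ, ∀ δ : ℝ, 0 < δ → ∃ C > (0:ℝ), ∀ h ∈ Set.Ioo (0:ℝ) 1, ∀ u : ℤ → ℝ,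
    MemL2 (fun n => jp h n ^ N * u n) →
    Sq h N ((Dp h)^[i+1] u) ≤ δ * Sq h N ((Dp h)^[i+2] u) + C * Sq h N u := by
  intro i
  induction i with
  | zero =>
    intro δ hδ
    obtain ⟨C, hC, hstep⟩ := step N δ hδ
    refine ⟨C, hC, ?_⟩
    intro h hmem u hu
    have := hstep h hmem u hu 0
    simpa using this
  | succ i ih =>
    intro δ hδ
    obtain ⟨C', hC', hstep⟩ := step N (δ/2) (by positivity)
    obtain ⟨C'', hC'', hih⟩ := ih (1/(2*C')) (by positivity)
    refine ⟨2*C'*C'', by positivity, ?_⟩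
    intro h hmem u hu
    have h1 := hstep h hmem u hu (i+1)
    have h2 := hih h hmem u hu
    simp only [show i+1+1 = i+2 by omega, show i+1+2 = i+3 by omega] at h1 ⊢
    have hm := mul_le_mul_of_nonneg_left h2 hC'.le
    have e : C' * (1/(2*C') * Sq h N ((Dp h)^[i+2] u) + C'' * Sq h N u)
        = (1/2) * Sq h N ((Dp h)^[i+2] u) + C' * C'' * Sq h N u := by
      field_simp
    rw [e] at hm
    linarith

/-- Chaining: control of `D^i` by `D^(i+r)` and `u`. -/
lemma lemChain (N i : ℕ) : ∀ r : ℕ, ∃ C > (0:ℝ), ∀ h ∈ Set.Ioo (0:ℝ) 1, ∀ u : ℤ → ℝ,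
    MemL2 (fun n => jp h n ^ N * u n) →
    Sq h N ((Dp h)^[i] u) ≤ Sq h N ((Dp h)^[i+r] u) + C * Sq h N u := by
  intro r
  induction r with
  | zero =>
    refine ⟨1, one_pos, ?_⟩
    intro h hmem u hu
    simp only [Nat.add_zero]
    have := Sq_nonneg h N u hmem.1.le
    linarith
  | succ r ih =>
    obtain ⟨C, hC, hch⟩ := ih
    by_cases hz : i + r = 0
    · refine ⟨C + 1, by positivity, ?_⟩
      intro h hmem u hu
      have h1 := hch h hmem u hu
      rw [hz] at h1
      simp only [Function.iterate_zero_apply] at h1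
      rw [show i + (r+1) = 1 by omega]
      have hnn := Sq_nonneg h N ((Dp h)^[1] u) hmem.1.le
      have hnn0 := Sq_nonneg h N u hmem.1.le
      linarith
    · obtain ⟨s, hs⟩ := Nat.exists_eq_succ_of_ne_zero hz
      obtain ⟨C₂, hC₂, hP⟩ := lemP N s 1 one_pos
      refine ⟨C + C₂, by positivity, ?_⟩
      intro h hmem u hu
      have h1 := hch h hmem u hu
      have h2 := hP h hmem u hu
      rw [hs] at h1
      rw [show i + (r+1) = s + 2 by omega]
      linarith

end DWS

open DWS in
/-- **Corollary 2.4 (2).**  For all `N, j ∈ ℕ` and `k ≥ 1` there is `C > 0`, independent of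
`h ∈ (0,1)`, such that `sup_m |⟨mh⟩^N D₊ʲu(m)| ≤ C (‖⟨x⟩^N u‖_{L²_h} + ‖⟨x⟩^N D₊^{j+k}u‖_{L²_h})`
whenever the two right-hand mesh functions lie in `L²_h`. -/
theorem discrete_weighted_sobolev_sup (N j k : ℕ) (hk : 1 ≤ k) :
    ∃ C > (0 : ℝ), ∀ h : ℝ, h ∈ Set.Ioo (0 : ℝ) 1 → ∀ u : ℤ → ℝ,
      MemL2 (fun m => jp h m ^ N * u m) →
      MemL2 (fun m => jp h m ^ N * (Dp h)^[j + k] u m) →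
        ∀ m : ℤ,
          |jp h m ^ N * (Dp h)^[j] u m|
            ≤ C * (nrm h (fun m => jp h m ^ N * u m)
                + nrm h (fun m => jp h m ^ N * (Dp h)^[j + k] u m)) := by

  obtain ⟨k', rfl⟩ : ∃ k', k = k' + 1 := ⟨k-1, by omega⟩
  obtain ⟨C₁, hC₁, hch1⟩ := lemChain N j (k'+1)
  obtain ⟨C₂, hC₂, hch2⟩ := lemChain N (j+1) k'
  have hM0 : (0:ℝ) < 2*4^N + 2*(N:ℝ)^2*4^N + 2 := by positivity
  refine ⟨Real.sqrt ((2*4^N + 2*(N:ℝ)^2*4^N + 2) * (2 + C₁ + C₂)),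
    Real.sqrt_pos.mpr (by positivity), ?_⟩
  intro h hmem u hu huL m
  have h0 := hmem.1
  have hv : MemL2 (fun n => jp h n ^ N * (Dp h)^[j] u n) := memF N h hmem u hu j
  have hv1 : MemL2 (fun n => jp h n ^ N * (Dp h)^[j+1] u n) := memF N h hmem u hu (j+1)
  -- discrete product rule bound
  have hptw : ∀ n : ℤ, |Dp h (fun i => jp h i ^ N * (Dp h)^[j] u i) n|
      ≤ 2^N * |jp h n ^ N * (Dp h)^[j+1] u n| + (N:ℝ)*2^N * |jp h n ^ N * (Dp h)^[j] u n| := by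
    intro n
    have ef : Dp h ((Dp h)^[j] u) = (Dp h)^[j+1] u := (Function.iterate_succ_apply' (Dp h) j u).symm
    have e : Dp h (fun i => jp h i ^ N * (Dp h)^[j] u i) n
        = jp h (n+1)^N * (Dp h)^[j+1] u n + ((jp h (n+1)^N - jp h n^N)/h) * (Dp h)^[j] u n := by
      rw [← ef]
      show (jp h (n+1) ^ N * (Dp h)^[j] u (n+1) - jp h n ^ N * (Dp h)^[j] u n)/h
        = jp h (n+1)^N * (((Dp h)^[j] u (n+1) - (Dp h)^[j] u n)/h) + _
      field_simp
      ring
    rw [e]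
    have t1 : |jp h (n+1)^N * (Dp h)^[j+1] u n| ≤ 2^N * |jp h n ^ N * (Dp h)^[j+1] u n| := by
      rw [abs_mul, abs_mul, abs_of_pos (pow_pos (jp_pos h (n+1)) N),
        abs_of_pos (pow_pos (jp_pos h n) N), ← mul_assoc]
      exact mul_le_mul_of_nonneg_right (wpow_succ N h hmem n) (abs_nonneg _)
    have t2 : |((jp h (n+1)^N - jp h n^N)/h) * (Dp h)^[j] u n|
        ≤ (N:ℝ)*2^N * |jp h n ^ N * (Dp h)^[j] u n| := by
      have hq : |(jp h (n+1)^N - jp h n^N)/h| ≤ (N:ℝ)*2^N * jp h n ^ N := by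
        rw [abs_div, abs_of_pos h0, div_le_iff₀ h0]
        exact wpow_diff_succ N h hmem n
      rw [abs_mul]
      calc |(jp h (n+1)^N - jp h n^N)/h| * |(Dp h)^[j] u n|
          ≤ ((N:ℝ)*2^N * jp h n ^ N) * |(Dp h)^[j] u n| :=
            mul_le_mul_of_nonneg_right hq (abs_nonneg _)
        _ = (N:ℝ)*2^N * (jp h n ^ N * |(Dp h)^[j] u n|) := by ring
        _ = (N:ℝ)*2^N * |jp h n ^ N * (Dp h)^[j] u n| := by
            rw [abs_mul, abs_of_pos (pow_pos (jp_pos h n) N)]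
    calc |jp h (n+1)^N * (Dp h)^[j+1] u n + ((jp h (n+1)^N - jp h n^N)/h) * (Dp h)^[j] u n|
        ≤ |jp h (n+1)^N * (Dp h)^[j+1] u n| + |((jp h (n+1)^N - jp h n^N)/h) * (Dp h)^[j] u n| :=
          abs_add_le _ _
      _ ≤ 2^N * |jp h n ^ N * (Dp h)^[j+1] u n| + (N:ℝ)*2^N * |jp h n ^ N * (Dp h)^[j] u n| :=
          add_le_add t1 t2
  have hdvmem : MemL2 (Dp h (fun i => jp h i ^ N * (Dp h)^[j] u i)) := by
    have m2 : MemL2 (fun n : ℤ => (2:ℝ)^N * |jp h n ^ N * (Dp h)^[j+1] u n|) :=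
      memL2_const_mul _ (memL2_abs hv1)
    have m3 : MemL2 (fun n : ℤ => (N:ℝ)*2^N * |jp h n ^ N * (Dp h)^[j] u n|) :=
      memL2_const_mul _ (memL2_abs hv)
    exact memL2_of_le (memL2_add m2 m3) hptw
  have hsup := sup_bound h hmem (fun i => jp h i ^ N * (Dp h)^[j] u i) hv hdvmem m
  -- identify the norms with Sq
  have hnrmv : (nrm h (fun i => jp h i ^ N * (Dp h)^[j] u i))^2 = Sq h N ((Dp h)^[j] u) := by
    rw [nrm_eq_sqrt_Sq, Real.sq_sqrt (Sq_nonneg _ _ _ h0.le)]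
  have hnrmdp : (nrm h (Dp h (fun i => jp h i ^ N * (Dp h)^[j] u i)))^2
      = ∑' n : ℤ, (Dp h (fun i => jp h i ^ N * (Dp h)^[j] u i) n)^2 * h := by
    rw [nrm, Real.sq_sqrt (tsum_nonneg fun n => mul_nonneg (sq_nonneg _) h0.le)]
  have e4 : ((2:ℝ)^N)^2 = (4:ℝ)^N := by
    rw [← pow_mul, mul_comm N 2, pow_mul]; norm_num
  -- tsum bound for the derivative of the weighted function
  have hb2 : ∑' n : ℤ, (Dp h (fun i => jp h i ^ N * (Dp h)^[j] u i) n)^2 * h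
      ≤ 2*4^N * Sq h N ((Dp h)^[j+1] u) + 2*(N:ℝ)^2*4^N * Sq h N ((Dp h)^[j] u) := by
    have ptsq : ∀ n : ℤ, (Dp h (fun i => jp h i ^ N * (Dp h)^[j] u i) n)^2 * h
        ≤ 2*4^N * ((jp h n ^ N * (Dp h)^[j+1] u n)^2*h)
          + 2*(N:ℝ)^2*4^N * ((jp h n ^ N * (Dp h)^[j] u n)^2*h) := by
      intro n
      have ha := hptw n
      have h1 : |Dp h (fun i => jp h i ^ N * (Dp h)^[j] u i) n|^2
          ≤ (2^N * |jp h n ^ N * (Dp h)^[j+1] u n| + (N:ℝ)*2^N * |jp h n ^ N * (Dp h)^[j] u n|)^2 :=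
        pow_le_pow_left₀ (abs_nonneg _) ha 2
      rw [sq_abs] at h1
      have h2 : (2^N * |jp h n ^ N * (Dp h)^[j+1] u n| + (N:ℝ)*2^N * |jp h n ^ N * (Dp h)^[j] u n|)^2
          ≤ 2*((2:ℝ)^N)^2 * (jp h n ^ N * (Dp h)^[j+1] u n)^2
            + 2*(N:ℝ)^2*((2:ℝ)^N)^2 * (jp h n ^ N * (Dp h)^[j] u n)^2 := by
        have s1 : |jp h n ^ N * (Dp h)^[j+1] u n|^2 = (jp h n ^ N * (Dp h)^[j+1] u n)^2 :=
          sq_abs _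
        have s2 : |jp h n ^ N * (Dp h)^[j] u n|^2 = (jp h n ^ N * (Dp h)^[j] u n)^2 :=
          sq_abs _
        have t := two_sq (2^N) ((N:ℝ)*2^N) (|jp h n ^ N * (Dp h)^[j+1] u n|)
          (|jp h n ^ N * (Dp h)^[j] u n|)
        have e5 : 2*((2:ℝ)^N * |jp h n ^ N * (Dp h)^[j+1] u n|)^2
            + 2*((N:ℝ)*2^N * |jp h n ^ N * (Dp h)^[j] u n|)^2
            = 2*((2:ℝ)^N)^2 * (|jp h n ^ N * (Dp h)^[j+1] u n|)^2
              + 2*(N:ℝ)^2*((2:ℝ)^N)^2 * (|jp h n ^ N * (Dp h)^[j] u n|)^2 := by ring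
        rw [e5, s1, s2] at t
        exact t
      rw [e4] at h2
      have h3 := le_trans h1 h2
      calc (Dp h (fun i => jp h i ^ N * (Dp h)^[j] u i) n)^2 * h
          ≤ (2*4^N * (jp h n ^ N * (Dp h)^[j+1] u n)^2
            + 2*(N:ℝ)^2*4^N * (jp h n ^ N * (Dp h)^[j] u n)^2) * h :=
            mul_le_mul_of_nonneg_right h3 h0.le
        _ = 2*4^N * ((jp h n ^ N * (Dp h)^[j+1] u n)^2*h)
            + 2*(N:ℝ)^2*4^N * ((jp h n ^ N * (Dp h)^[j] u n)^2*h) := by ring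
    have sR : Summable (fun n : ℤ => 2*4^N * ((jp h n ^ N * (Dp h)^[j+1] u n)^2*h)
        + 2*(N:ℝ)^2*4^N * ((jp h n ^ N * (Dp h)^[j] u n)^2*h)) :=
      ((hv1.mul_right h).mul_left _).add ((hv.mul_right h).mul_left _)
    calc ∑' n : ℤ, (Dp h (fun i => jp h i ^ N * (Dp h)^[j] u i) n)^2 * h
        ≤ ∑' n : ℤ, (2*4^N * ((jp h n ^ N * (Dp h)^[j+1] u n)^2*h)
            + 2*(N:ℝ)^2*4^N * ((jp h n ^ N * (Dp h)^[j] u n)^2*h)) :=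
          Summable.tsum_le_tsum ptsq (hdvmem.mul_right h) sR
      _ = 2*4^N * Sq h N ((Dp h)^[j+1] u) + 2*(N:ℝ)^2*4^N * Sq h N ((Dp h)^[j] u) := by
          rw [Summable.tsum_add ((hv1.mul_right h).mul_left _) ((hv.mul_right h).mul_left _),
            tsum_mul_left, tsum_mul_left]
          rfl
  -- chain estimates
  have c1 := hch1 h hmem u hu
  have c2 := hch2 h hmem u hu
  rw [show (j+1)+k' = j+(k'+1) by omega] at c2
  have hS0 : 0 ≤ Sq h N u := Sq_nonneg _ _ _ h0.le
  have hSL : 0 ≤ Sq h N ((Dp h)^[j+(k'+1)] u) := Sq_nonneg _ _ _ h0.le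
  have hSj : 0 ≤ Sq h N ((Dp h)^[j] u) := Sq_nonneg _ _ _ h0.le
  have hSj1 : 0 ≤ Sq h N ((Dp h)^[j+1] u) := Sq_nonneg _ _ _ h0.le
  have h4N : (0:ℝ) < 4^N := by positivity
  -- quadratic bound on the point value
  have q1 : (jp h m ^ N * (Dp h)^[j] u m)^2
      ≤ (2*4^N + 2*(N:ℝ)^2*4^N + 2) * (Sq h N ((Dp h)^[j] u) + Sq h N ((Dp h)^[j+1] u)) := by
    have := hsup
    rw [hnrmdp, hnrmv] at this
    nlinarith [mul_nonneg h4N.le hSj, mul_nonneg h4N.le hSj1,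
      mul_nonneg (mul_nonneg (sq_nonneg (N:ℝ)) h4N.le) hSj,
      mul_nonneg (mul_nonneg (sq_nonneg (N:ℝ)) h4N.le) hSj1]
  have q2 : Sq h N ((Dp h)^[j] u) + Sq h N ((Dp h)^[j+1] u)
      ≤ (2 + C₁ + C₂) * (Sq h N u + Sq h N ((Dp h)^[j+(k'+1)] u)) := by
    nlinarith [mul_nonneg hC₁.le hSL, mul_nonneg hC₂.le hSL,
      mul_nonneg hC₁.le hS0, mul_nonneg hC₂.le hS0]
  have q3 : (jp h m ^ N * (Dp h)^[j] u m)^2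
      ≤ ((2*4^N + 2*(N:ℝ)^2*4^N + 2) * (2 + C₁ + C₂))
        * (Sq h N u + Sq h N ((Dp h)^[j+(k'+1)] u)) := by
    calc (jp h m ^ N * (Dp h)^[j] u m)^2
        ≤ (2*4^N + 2*(N:ℝ)^2*4^N + 2) * (Sq h N ((Dp h)^[j] u) + Sq h N ((Dp h)^[j+1] u)) := q1
      _ ≤ (2*4^N + 2*(N:ℝ)^2*4^N + 2) * ((2 + C₁ + C₂) * (Sq h N u + Sq h N ((Dp h)^[j+(k'+1)] u))) :=
          mul_le_mul_of_nonneg_left q2 hM0.le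
      _ = _ := by ring
  -- take square roots
  have hsq : |jp h m ^ N * (Dp h)^[j] u m|
      ≤ Real.sqrt ((2*4^N + 2*(N:ℝ)^2*4^N + 2) * (2 + C₁ + C₂))
        * Real.sqrt (Sq h N u + Sq h N ((Dp h)^[j+(k'+1)] u)) := by
    rw [← Real.sqrt_mul (by positivity) (Sq h N u + Sq h N ((Dp h)^[j+(k'+1)] u)),
      ← Real.sqrt_sq_eq_abs]
    exact Real.sqrt_le_sqrt q3
  have hsplit : Real.sqrt (Sq h N u + Sq h N ((Dp h)^[j+(k'+1)] u))
      ≤ Real.sqrt (Sq h N u) + Real.sqrt (Sq h N ((Dp h)^[j+(k'+1)] u)) := by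
    have h' : Sq h N u + Sq h N ((Dp h)^[j+(k'+1)] u)
        ≤ (Real.sqrt (Sq h N u) + Real.sqrt (Sq h N ((Dp h)^[j+(k'+1)] u)))^2 := by
      nlinarith [Real.sq_sqrt hS0, Real.sq_sqrt hSL, Real.sqrt_nonneg (Sq h N u),
        Real.sqrt_nonneg (Sq h N ((Dp h)^[j+(k'+1)] u)),
        mul_nonneg (Real.sqrt_nonneg (Sq h N u)) (Real.sqrt_nonneg (Sq h N ((Dp h)^[j+(k'+1)] u)))]
    calc Real.sqrt (Sq h N u + Sq h N ((Dp h)^[j+(k'+1)] u))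
        ≤ Real.sqrt ((Real.sqrt (Sq h N u) + Real.sqrt (Sq h N ((Dp h)^[j+(k'+1)] u)))^2) :=
          Real.sqrt_le_sqrt h'
      _ = Real.sqrt (Sq h N u) + Real.sqrt (Sq h N ((Dp h)^[j+(k'+1)] u)) :=
          Real.sqrt_sq (by positivity)
  have hfin := le_trans hsq (mul_le_mul_of_nonneg_left hsplit (Real.sqrt_nonneg _))
  rw [nrm_eq_sqrt_Sq, nrm_eq_sqrt_Sq]
  exact hfin
end
end

section
/- (Discrete nonlinear Gronwall-type lemma.) Let P, Q : ℝ → ℝ be C¹, nondecreasing, positive functions, let T₀ > 0 and K > 0. Then there exist T ∈ (0,T₀], L > 0, and ε > 0, depending only on K, P, Q (and T₀), with the following property: for every Δt ∈ (0,ε) and every sequence of reals (η_j)_{j≥0} satisfying η₀ ≤ K and (η_{j+1} − η_j)/Δt ≤ P(η_j)·η_{j+1} + Q(η_j) for all j with jΔt ∈ [0,T₀] and (j+1)Δt ∈ [0,T₀], one has η_j ≤ L for every j with jΔt ≤ T. -/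
set_option maxHeartbeats 1000000

namespace Gronwall2_5

/-- **Lemma 2.5** (discrete nonlinear Gronwall-type lemma).  Let `P, Q` be `C¹`, nondecreasing,
positive functions, `T₀ > 0` and `K > 0`.  Then there exist `T ∈ (0,T₀]`, `L > 0` and `ε > 0`
(depending only on `K`, `P`, `Q`, `T₀`) such that for every time step `Δt ∈ (0,ε)` and every
sequence `η` with `η 0 ≤ K` satisfying the difference inequality
`(η_{j+1} - η_j)/Δt ≤ P(η_j)·η_{j+1} + Q(η_j)` whenever `jΔt, (j+1)Δt ∈ [0,T₀]`, one has
`η_j ≤ L` for every `j` with `jΔt ≤ T`. -/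
theorem discrete_gronwall
    (P Q : ℝ → ℝ) (hP : ContDiff ℝ 1 P) (hQ : ContDiff ℝ 1 Q)
    (hPmono : Monotone P) (hQmono : Monotone Q)
    (hPpos : ∀ x : ℝ, 0 < P x) (hQpos : ∀ x : ℝ, 0 < Q x)
    (T₀ K : ℝ) (hT₀ : 0 < T₀) (hK : 0 < K) :
    ∃ T : ℝ, T ∈ Set.Ioc 0 T₀ ∧ ∃ L > (0 : ℝ), ∃ ε > (0 : ℝ),
      ∀ Δt : ℝ, 0 < Δt → Δt < ε →
        ∀ η : ℕ → ℝ, η 0 ≤ K →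
          (∀ j : ℕ, (j : ℝ) * Δt ≤ T₀ → ((j : ℝ) + 1) * Δt ≤ T₀ →
            (η (j + 1) - η j) / Δt ≤ P (η j) * η (j + 1) + Q (η j)) →
          ∀ j : ℕ, (j : ℝ) * Δt ≤ T → η j ≤ L := by
  obtain ⟨L, hL⟩ : ∃ x : ℝ, x = K + 1 := ⟨_, rfl⟩
  obtain ⟨M, hM⟩ : ∃ x : ℝ, x = P L := ⟨_, rfl⟩
  obtain ⟨N, hN⟩ : ∃ x : ℝ, x = Q L := ⟨_, rfl⟩
  have hMpos : 0 < M := hM ▸ hPpos L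
  have hNpos : 0 < N := hN ▸ hQpos L
  obtain ⟨C, hC⟩ : ∃ x : ℝ, x = N + 2 * M * (L + N) := ⟨_, rfl⟩
  have hLpos : 0 < L := by rw [hL]; positivity
  have hCpos : 0 < C := by rw [hC]; positivity
  refine ⟨min T₀ (1 / C), ⟨lt_min hT₀ (by positivity), min_le_left _ _⟩,
    L, hLpos, min 1 (1 / (2 * M)), lt_min one_pos (by positivity), ?_⟩
  intro Δt hΔt hΔtε η hη0 hrec
  obtain ⟨T, hT⟩ : ∃ x : ℝ, x = min T₀ (1 / C) := ⟨_, rfl⟩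
  rw [← hT]
  have hΔt1 : Δt ≤ 1 := (lt_min_iff.mp hΔtε).1.le
  have hΔtM : Δt * M ≤ 1 / 2 := by
    have h2 : Δt < 1 / (2 * M) := (lt_min_iff.mp hΔtε).2
    rw [lt_div_iff₀ (by positivity)] at h2
    nlinarith
  have hTT₀ : T ≤ T₀ := hT ▸ min_le_left _ _
  have hTC : C * T ≤ 1 := by
    have h := mul_le_mul_of_nonneg_left ((hT ▸ min_le_right T₀ (1 / C) : T ≤ 1 / C)) hCpos.le
    calc C * T ≤ C * (1 / C) := h
    _ = 1 := by field_simp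
  have aux : ∀ j : ℕ, (j : ℝ) * Δt ≤ T → η j ≤ K + C * ((j : ℝ) * Δt) := by
    intro j
    induction j with
    | zero => intro _; simpa using hη0
    | succ j ih =>
      intro hj1
      have hjle : (j : ℝ) * Δt ≤ ((j : ℝ) + 1) * Δt := by nlinarith
      have hj1' : ((j : ℝ) + 1) * Δt ≤ T := by push_cast at hj1; linarith
      have hjT : (j : ℝ) * Δt ≤ T := le_trans hjle hj1'
      have hηj : η j ≤ K + C * ((j : ℝ) * Δt) := ih hjT
      have hjnn : 0 ≤ (j : ℝ) * Δt := by positivity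
      have hηjL : η j ≤ L := by
        have : C * ((j : ℝ) * Δt) ≤ C * T := mul_le_mul_of_nonneg_left hjT hCpos.le
        rw [hL]; linarith
      have hstep : η (j + 1) ≤ η j + Δt * C := by
        have hd := hrec j (le_trans hjT hTT₀) (le_trans hj1' hTT₀)
        rw [div_le_iff₀ hΔt] at hd
        have hPle : P (η j) ≤ M := hM ▸ hPmono hηjL
        have hQle : Q (η j) ≤ N := hN ▸ hQmono hηjL
        rcases le_or_gt (η (j + 1)) 0 with hneg | hpos
        · have hPη : P (η j) * η (j + 1) ≤ 0 :=
            mul_nonpos_of_nonneg_of_nonpos (hPpos (η j)).le hneg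
          have hQd : Δt * Q (η j) ≤ Δt * N := by nlinarith
          have hCN : Δt * N ≤ Δt * C := by
            have : N ≤ C := by rw [hC]; nlinarith
            nlinarith
          nlinarith
        · have h1 : η (j + 1) - η j ≤ Δt * M * η (j + 1) + Δt * N := by
            nlinarith [mul_le_mul_of_nonneg_right (mul_le_mul_of_nonneg_left hPle hΔt.le) hpos.le,
              mul_le_mul_of_nonneg_left hQle hΔt.le]
          have hA2B : η (j + 1) ≤ 2 * (η j + Δt * N) := by
            nlinarith [mul_nonneg hpos.le (by linarith : (0:ℝ) ≤ 1/2 - Δt * M)]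
          have hBle : η j + Δt * N ≤ L + N := by nlinarith [hηjL, hΔt1, hNpos]
          have e1 : Δt * M * η (j + 1) ≤ Δt * M * (2 * (η j + Δt * N)) :=
            mul_le_mul_of_nonneg_left hA2B (by positivity)
          have e2 : Δt * M * (2 * (η j + Δt * N)) ≤ Δt * M * (2 * (L + N)) :=
            mul_le_mul_of_nonneg_left (by linarith) (by positivity)
          have hexp : Δt * C = Δt * N + Δt * M * (2 * (L + N)) := by rw [hC]; ring
          linarith [h1, e1, e2, hexp]
      have : η (j + 1) ≤ K + C * ((j : ℝ) * Δt) + Δt * C := by linarith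
      push_cast
      linarith [this]
  intro j hjT
  have h1 := aux j hjT
  have h2 : C * ((j : ℝ) * Δt) ≤ C * T := mul_le_mul_of_nonneg_left hjT hCpos.le
  linarith
end Gronwall2_5
end
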